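/- arXiv:2307.03066 — 8 statements merged into one kernel-verified Lean document; each statement's English description precedes it below -/
import Mathlib

section
/- For all natural numbers d ≤ r, there exists s ≤ 3dr^2 such that the following holds: if A ⊆ ℤ^d is finite with affine span of dimension d, and A is contained in the union of r parallel lines l_1, ..., l_r with |A ∩ l_i| ≥ 2 for every i, then there exist a_1, ..., a_s ∈ A with |A + {a_1, ..., a_s}| ≥ (d+1)|A| - 3dr. -/
open Pointwise
open scoped Classical

private lemma card_union_lb {γ : Type*} [DecidableEq γ] (X Y : Finset γ)
    (h : (X ∩ Y).card ≤ 1) : X.card + Y.card ≤ (X ∪ Y).card + 1 := by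
  have h2 := Finset.card_union_add_card_inter X Y
  omega

set_option maxHeartbeats 1600000 in
theorem stmt_1 (d r : ℕ) (hdr : d ≤ r) :
    ∃ s : ℕ, s ≤ 3 * d * r ^ 2 ∧
      ∀ (A : Finset (Fin d → ℤ)) (v : Fin d → ℝ) (x : Fin r → (Fin d → ℝ)),
        v ≠ 0 →
        Module.finrank ℝ (affineSpan ℝ
          ((fun p : Fin d → ℤ => fun j => (p j : ℝ)) '' (A : Set (Fin d → ℤ)))).direction = d →
        (∀ p ∈ A, ∃ i : Fin r, ∃ t : ℝ, (fun j => (p j : ℝ)) = x i + t • v) →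
        (∀ i : Fin r,
          2 ≤ ((A : Set (Fin d → ℤ)) ∩ {p | ∃ t : ℝ, (fun j => (p j : ℝ)) = x i + t • v}).ncard) →
        ∃ a : Fin s → (Fin d → ℤ), (∀ i, a i ∈ A) ∧
          ((d + 1 : ℤ) * A.card - 3 * d * r ≤ ((A + Finset.image a Finset.univ).card : ℤ)) := by
  classical
  rcases Nat.eq_zero_or_pos d with hd0 | hdpos
  · subst hd0
    refine ⟨0, by simp, ?_⟩
    intro A v x hv hrank hcover hlines
    refine ⟨Fin.elim0, fun i => i.elim0, ?_⟩
    have hA : A = ∅ := by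
      by_contra hA
      obtain ⟨a, ha⟩ := Finset.nonempty_iff_ne_empty.2 hA
      rcases Nat.eq_zero_or_pos r with hr0 | hrpos
      · subst hr0
        obtain ⟨i, -⟩ := hcover a ha
        exact i.elim0
      · have h2 := hlines ⟨0, hrpos⟩
        have hsub : ((A : Set (Fin 0 → ℤ)) ∩
            {p | ∃ t : ℝ, (fun j => (p j : ℝ)) = x ⟨0, hrpos⟩ + t • v}).Subsingleton :=
          Set.subsingleton_of_subsingleton
        rcases hsub.eq_empty_or_singleton with h | ⟨z, h⟩ <;> rw [h] at h2 <;> simp at h2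
    subst hA
    simp
  · refine ⟨3 * d * r ^ 2, le_rfl, ?_⟩
    intro A v x hv hrank hcover _hlines
    classical
    -- the casting hom
    set φ : (Fin d → ℤ) →+ (Fin d → ℝ) := AddMonoidHom.compLeft (Int.castAddHom ℝ) (Fin d) with hφ
    have hφapp : ∀ p : Fin d → ℤ, φ p = fun j => (p j : ℝ) := fun p => rfl
    have hφinj : Function.Injective φ := by
      intro p q h
      funext j
      have h2 : (fun j => ((p j : ℝ))) = (fun j => ((q j : ℝ))) := by
        rw [← hφapp, ← hφapp, h]
      have := congrFun h2 j
      exact_mod_cast this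
    set A' : Finset (Fin d → ℝ) := A.image φ with hA'
    have hA'card : A'.card = A.card := Finset.card_image_of_injective _ hφinj
    have hAne : A'.Nonempty := by
      rw [Finset.nonempty_iff_ne_empty]
      intro h
      have hAe : A = ∅ := by
        rwa [hA', Finset.image_eq_empty] at h
      rw [hAe, Finset.coe_empty, Set.image_empty, AffineSubspace.span_empty,
        AffineSubspace.direction_bot, finrank_bot] at hrank
      omega
    obtain ⟨i₀, hi₀⟩ : ∃ i, v i ≠ 0 := by
      by_contra h; push_neg at h; exact hv (funext h)
    set hc : (Fin d → ℝ) → ℝ := fun z => z i₀ / v i₀ with hhc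
    set π : (Fin d → ℝ) → (Fin d → ℝ) := fun z => z - hc z • v with hπ
    have hcadd : ∀ z w, hc (z + w) = hc z + hc w := by
      intro z w; simp [hhc, add_div]
    have hπadd : ∀ z w, π (z + w) = π z + π w := by
      intro z w
      funext j
      simp only [hπ, hcadd, Pi.sub_apply, Pi.add_apply, Pi.smul_apply, smul_eq_mul]
      ring
    have hπv : ∀ (z : Fin d → ℝ) (t : ℝ), π (z + t • v) = π z := by
      intro z t
      have h1 : hc (t • v) = t := by
        simp only [hhc, Pi.smul_apply, smul_eq_mul]
        field_simp
      funext j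
      simp only [hπ, hcadd, h1, Pi.sub_apply, Pi.add_apply, Pi.smul_apply, smul_eq_mul]
      ring
    have hdecomp : ∀ z, z = π z + hc z • v := by
      intro z; funext j; simp [hπ]
    -- the projected point set
    set P : Finset (Fin d → ℝ) := A'.image π with hP
    have hPne : P.Nonempty := hAne.image π
    have hPcard : P.card ≤ r := by
      have hsub : P ⊆ Finset.image (fun i => π (x i)) Finset.univ := by
        intro p hp
        obtain ⟨z, hz, rfl⟩ := Finset.mem_image.1 hp
        obtain ⟨a, ha, rfl⟩ := Finset.mem_image.1 hz
        obtain ⟨i, t, hit⟩ := hcover a ha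
        refine Finset.mem_image.2 ⟨i, Finset.mem_univ _, ?_⟩
        have hφa : φ a = x i + t • v := by rw [hφapp]; exact hit
        rw [hφa, hπv]
      calc P.card ≤ (Finset.image (fun i => π (x i)) Finset.univ).card := Finset.card_le_card hsub
        _ ≤ (Finset.univ : Finset (Fin r)).card := Finset.card_image_le
        _ = r := by simp
    -- the parts
    set C : (Fin d → ℝ) → Finset (Fin d → ℝ) := fun p => A'.filter (fun z => π z = p) with hC
    have hCsub : ∀ p, C p ⊆ A' := fun p => Finset.filter_subset _ _
    have hCπ : ∀ p, ∀ z ∈ C p, π z = p := fun p z hz => (Finset.mem_filter.1 hz).2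
    have hCne : ∀ p ∈ P, (C p).Nonempty := by
      intro p hp
      obtain ⟨z, hz, rfl⟩ := Finset.mem_image.1 hp
      exact ⟨z, Finset.mem_filter.2 ⟨hz, rfl⟩⟩
    have hn1 : ∀ p ∈ P, 1 ≤ (C p).card := fun p hp => Finset.card_pos.2 (hCne p hp)
    have hπmem : ∀ z ∈ A', π z ∈ P := fun z hz => Finset.mem_image_of_mem π hz
    have hsumn : ∑ p ∈ P, (C p).card = A'.card := (Finset.card_eq_sum_card_image π A').symm
    -- endpoints of parts
    have endEx : ∀ p : Fin d → ℝ, ∃ uw : (Fin d → ℝ) × (Fin d → ℝ),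
        p ∈ P → uw.1 ∈ C p ∧ uw.2 ∈ C p ∧ (∀ c ∈ C p, hc uw.1 ≤ hc c) ∧
          (∀ c ∈ C p, hc c ≤ hc uw.2) := by
      intro p
      by_cases hp : p ∈ P
      · obtain ⟨u, hu, humin⟩ := Finset.exists_min_image (C p) hc (hCne p hp)
        obtain ⟨w, hw, hwmax⟩ := Finset.exists_max_image (C p) hc (hCne p hp)
        exact ⟨(u, w), fun _ => ⟨hu, hw, humin, hwmax⟩⟩
      · exact ⟨(0, 0), fun h => absurd h hp⟩
    choose uwp huwp using endEx
    set um : (Fin d → ℝ) → (Fin d → ℝ) := fun p => (uwp p).1 with hum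
    set wm : (Fin d → ℝ) → (Fin d → ℝ) := fun p => (uwp p).2 with hwm
    have humem : ∀ p ∈ P, um p ∈ C p := fun p hp => (huwp p hp).1
    have hwmem : ∀ p ∈ P, wm p ∈ C p := fun p hp => (huwp p hp).2.1
    have humin : ∀ p ∈ P, ∀ c ∈ C p, hc (um p) ≤ hc c := fun p hp => (huwp p hp).2.2.1
    have hwmax : ∀ p ∈ P, ∀ c ∈ C p, hc c ≤ hc (wm p) := fun p hp => (huwp p hp).2.2.2
    -- integer preimages of endpoints
    have preEx : ∀ p : Fin d → ℝ, ∃ zz : (Fin d → ℤ) × (Fin d → ℤ), p ∈ P →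
        zz.1 ∈ A ∧ zz.2 ∈ A ∧ φ zz.1 = um p ∧ φ zz.2 = wm p := by
      intro p
      by_cases hp : p ∈ P
      · have h1 : um p ∈ A' := hCsub p (humem p hp)
        have h2 : wm p ∈ A' := hCsub p (hwmem p hp)
        rw [hA'] at h1 h2
        obtain ⟨z1, hz1, hz1e⟩ := Finset.mem_image.1 h1
        obtain ⟨z2, hz2, hz2e⟩ := Finset.mem_image.1 h2
        exact ⟨(z1, z2), fun _ => ⟨hz1, hz2, hz1e, hz2e⟩⟩
      · exact ⟨(0, 0), fun h => absurd h hp⟩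
    choose zz hzz using preEx
    set B : Finset (Fin d → ℤ) := P.biUnion (fun p => {(zz p).1, (zz p).2}) with hB
    have hBsubA : B ⊆ A := by
      intro b hb
      obtain ⟨p, hp, hbp⟩ := Finset.mem_biUnion.1 hb
      rcases Finset.mem_insert.1 hbp with h | h
      · exact h ▸ (hzz p hp).1
      · rw [Finset.mem_singleton.1 h]; exact (hzz p hp).2.1
    have hBcard : B.card ≤ 2 * P.card := by
      calc B.card ≤ ∑ p ∈ P, ({(zz p).1, (zz p).2} : Finset (Fin d → ℤ)).card :=
            Finset.card_biUnion_le
        _ ≤ ∑ _p ∈ P, 2 := Finset.sum_le_sum (fun p _ =>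
              le_trans (Finset.card_insert_le _ _) (by simp))
        _ = 2 * P.card := by rw [Finset.sum_const, smul_eq_mul, mul_comm]
    set B' : Finset (Fin d → ℝ) := B.image φ with hB'
    have humB : ∀ p ∈ P, um p ∈ B' := by
      intro p hp
      exact Finset.mem_image.2 ⟨(zz p).1,
        Finset.mem_biUnion.2 ⟨p, hp, by simp⟩, (hzz p hp).2.2.1⟩
    have hwmB : ∀ p ∈ P, wm p ∈ B' := by
      intro p hp
      exact Finset.mem_image.2 ⟨(zz p).2,
        Finset.mem_biUnion.2 ⟨p, hp, by simp⟩, (hzz p hp).2.2.2⟩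
    -- squared euclidean distance and minimal pairs
    set dsq : (Fin d → ℝ) × (Fin d → ℝ) → ℝ := fun z => ∑ j, (z.1 j - z.2 j) ^ 2 with hdsq
    have hdsq_nonneg : ∀ z, 0 ≤ dsq z :=
      fun z => Finset.sum_nonneg (fun j _ => sq_nonneg _)
    set pairs : (Fin d → ℝ) → Finset ((Fin d → ℝ) × (Fin d → ℝ)) :=
      fun σ => (P ×ˢ P).filter (fun z => z.1 + z.2 = σ) with hpairs
    have hmempairs : ∀ σ z, z ∈ pairs σ ↔ z.1 ∈ P ∧ z.2 ∈ P ∧ z.1 + z.2 = σ := by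
      intro σ z
      simp [hpairs, Finset.mem_filter, Finset.mem_product, and_assoc]
    have prEx : ∀ σ : Fin d → ℝ, ∃ z, (pairs σ).Nonempty →
        z ∈ pairs σ ∧ ∀ z' ∈ pairs σ, dsq z ≤ dsq z' := by
      intro σ
      by_cases hne : (pairs σ).Nonempty
      · obtain ⟨z, hz, hzmin⟩ := Finset.exists_min_image (pairs σ) dsq hne
        exact ⟨z, fun _ => ⟨hz, hzmin⟩⟩
      · exact ⟨(0, 0), fun h => absurd h hne⟩
    choose pr hpr using prEx
    have hpairsne : ∀ p ∈ P, ∀ q ∈ P, (pairs (p + q)).Nonempty :=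
      fun p hp q hq => ⟨(p, q), (hmempairs _ _).2 ⟨hp, hq, rfl⟩⟩
    -- pr on loops
    have prloop : ∀ p ∈ P, pr (p + p) = (p, p) := by
      intro p hp
      have hne := hpairsne p hp p hp
      obtain ⟨hmem, hmin⟩ := hpr _ hne
      have h0 : dsq (pr (p + p)) ≤ 0 := by
        have := hmin (p, p) ((hmempairs _ _).2 ⟨hp, hp, rfl⟩)
        simpa [hdsq] using this
      have h0' : dsq (pr (p + p)) = 0 := le_antisymm h0 (hdsq_nonneg _)
      have heq : (pr (p + p)).1 = (pr (p + p)).2 := by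
        funext j
        have hj := (Finset.sum_eq_zero_iff_of_nonneg
          (fun j _ => sq_nonneg ((pr (p+p)).1 j - (pr (p+p)).2 j))).1 h0' j (Finset.mem_univ j)
        have h2 : (pr (p+p)).1 j - (pr (p+p)).2 j = 0 :=
          pow_eq_zero_iff two_ne_zero |>.1 hj
        linarith [h2]
      have hsum : (pr (p + p)).1 + (pr (p + p)).2 = p + p := ((hmempairs _ _).1 hmem).2.2
      have h1 : (pr (p + p)).1 = p := by
        funext j
        have e1 := congrFun hsum j
        have e2 := congrFun heq j
        simp only [Pi.add_apply] at e1
        linarith [e1, e2]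
      have h2 : (pr (p + p)).2 = p := by rw [← heq]; exact h1
      exact Prod.ext h1 h2
    -- neighbour sets
    set N : (Fin d → ℝ) → Finset (Fin d → ℝ) := fun p =>
      P.filter (fun q => q ≠ p ∧ (pr (p + q) = (p, q) ∨ pr (p + q) = (q, p))) with hN
    -- degree lemma
    have hdeg : ∀ p ∈ P, d ≤ (N p).card + 1 := by
      intro p hp
      set V : Submodule ℝ (Fin d → ℝ) :=
        Submodule.span ℝ (((N p).image (fun q => q - p)) : Set (Fin d → ℝ)) with hV
      have stepA : ∀ q ∈ P, q - p ∈ V := by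
        by_contra hcon
        push_neg at hcon
        set Bad := P.filter (fun q => q - p ∉ V) with hBad
        have hBadne : Bad.Nonempty := by
          obtain ⟨q, hq, hqv⟩ := hcon
          exact ⟨q, Finset.mem_filter.2 ⟨hq, hqv⟩⟩
        obtain ⟨q', hq'Bad, hminq⟩ := Finset.exists_min_image Bad (fun q => dsq (p, q)) hBadne
        obtain ⟨hq'P, hq'V⟩ := Finset.mem_filter.1 hq'Bad
        have hq'ne : q' ≠ p := by
          rintro rfl
          exact hq'V (by simpa using Submodule.zero_mem V)
        have hne := hpairsne p hp q' hq'P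
        obtain ⟨hprmem, hprmin⟩ := hpr _ hne
        obtain ⟨hXP, hYP, hXY⟩ := (hmempairs _ _).1 hprmem
        -- notation
        set X := (pr (p + q')).1 with hX
        set Y := (pr (p + q')).2 with hY
        have hNmem : q' ∈ N p → False := by
          intro hqn
          exact hq'V (Submodule.subset_span
            (Finset.mem_coe.2 (Finset.mem_image_of_mem (fun q => q - p) hqn)))
        by_cases hXp : X = p
        · refine hNmem (Finset.mem_filter.2 ⟨hq'P, hq'ne, Or.inl ?_⟩)
          have hYq : Y = q' := by
            have := hXY
            rw [hXp] at this
            exact add_left_cancel this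
          rw [← hX, ← hY] at *
          exact Prod.ext hXp hYq
        by_cases hYp : Y = p
        · refine hNmem (Finset.mem_filter.2 ⟨hq'P, hq'ne, Or.inr ?_⟩)
          have hXq : X = q' := by
            have h5 : X + Y = q' + p := by rw [hXY]; exact add_comm _ _
            rw [hYp] at h5
            exact add_right_cancel h5
          exact Prod.ext hXq hYp
        -- main case
        · have hq'j : ∀ j, q' j = X j + Y j - p j := by
            intro j
            have := congrFun hXY j
            simp only [Pi.add_apply] at this
            linarith
          have hid : dsq (p, q') + dsq (X, Y) = 2 * dsq (p, X) + 2 * dsq (p, Y) := by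
            have hterm : ∀ j : Fin d, (p j - q' j) ^ 2 + (X j - Y j) ^ 2
                = 2 * (p j - X j) ^ 2 + 2 * (p j - Y j) ^ 2 := by
              intro j; rw [hq'j j]; ring
            have hof : dsq (p, q') + dsq (X, Y) = ∑ j, ((p j - q' j) ^ 2 + (X j - Y j) ^ 2) := by
              rw [hdsq, ← Finset.sum_add_distrib]
            have hof2 : 2 * dsq (p, X) + 2 * dsq (p, Y)
                = ∑ j, (2 * (p j - X j) ^ 2 + 2 * (p j - Y j) ^ 2) := by
              rw [hdsq]
              simp only
              rw [Finset.mul_sum, Finset.mul_sum, ← Finset.sum_add_distrib]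
            rw [hof, hof2]
            exact Finset.sum_congr rfl (fun j _ => hterm j)
          have hminXY : dsq (X, Y) ≤ dsq (p, q') := by
            have := hprmin (p, q') ((hmempairs _ _).2 ⟨hp, hq'P, rfl⟩)
            simpa [← hX, ← hY] using this
          have hposY : 0 < dsq (p, Y) := by
            have hex : ∃ j, Y j ≠ p j := by
              by_contra hall
              push_neg at hall
              exact hYp (funext hall)
            obtain ⟨j, hj⟩ := hex
            refine Finset.sum_pos' (fun i _ => sq_nonneg _) ⟨j, Finset.mem_univ j, ?_⟩
            have : p j - Y j ≠ 0 := fun hz => hj (by linarith [sub_eq_zero.1 hz])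
            positivity
          have hposX : 0 < dsq (p, X) := by
            have hex : ∃ j, X j ≠ p j := by
              by_contra hall
              push_neg at hall
              exact hXp (funext hall)
            obtain ⟨j, hj⟩ := hex
            refine Finset.sum_pos' (fun i _ => sq_nonneg _) ⟨j, Finset.mem_univ j, ?_⟩
            have : p j - X j ≠ 0 := fun hz => hj (by linarith [sub_eq_zero.1 hz])
            positivity
          have hXlt : dsq (p, X) < dsq (p, q') := by linarith
          have hYlt : dsq (p, Y) < dsq (p, q') := by linarith
          have hXV : X - p ∈ V := by
            by_contra hXV
            have : X ∈ Bad := Finset.mem_filter.2 ⟨hXP, hXV⟩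
            linarith [hminq X this]
          have hYV : Y - p ∈ V := by
            by_contra hYV
            have : Y ∈ Bad := Finset.mem_filter.2 ⟨hYP, hYV⟩
            linarith [hminq Y this]
          refine hq'V ?_
          have hcomb : q' - p = (X - p) + (Y - p) := by
            funext j
            simp only [Pi.sub_apply, Pi.add_apply]
            rw [hq'j j]; ring
          rw [hcomb]
          exact Submodule.add_mem V hXV hYV
      -- dimension count
      have hspan : vectorSpan ℝ (A' : Set (Fin d → ℝ)) ≤ V ⊔ Submodule.span ℝ {v} := by
        rw [vectorSpan_def, Submodule.span_le]
        rintro w hw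
        rw [Set.mem_vsub] at hw
        obtain ⟨z, hz, z', hz', rfl⟩ := hw
        rw [Finset.mem_coe] at hz hz'
        have hz1 : z -ᵥ z' = ((π z - p) - (π z' - p)) + (hc z - hc z') • v := by
          have e1 := hdecomp z
          have e2 := hdecomp z'
          funext j
          have e1j := congrFun e1 j
          have e2j := congrFun e2 j
          simp only [Pi.add_apply, Pi.smul_apply, smul_eq_mul] at e1j e2j
          simp only [vsub_eq_sub, Pi.sub_apply, Pi.add_apply, Pi.smul_apply, smul_eq_mul]
          rw [e1j, e2j]
          ring
        rw [SetLike.mem_coe, hz1]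
        refine Submodule.add_mem _ (Submodule.sub_mem _ ?_ ?_) ?_
        · exact Submodule.mem_sup_left (stepA (π z) (hπmem z hz))
        · exact Submodule.mem_sup_left (stepA (π z') (hπmem z' hz'))
        · exact Submodule.mem_sup_right
            (Submodule.smul_mem _ _ (Submodule.mem_span_singleton_self v))
      have hfinrankPi : Module.finrank ℝ (Fin d → ℝ) = d := by
        simp
      have htop : vectorSpan ℝ (A' : Set (Fin d → ℝ)) = ⊤ := by
        apply Submodule.eq_top_of_finrank_eq
        have himg : ((fun p : Fin d → ℤ => fun j => (p j : ℝ)) '' (A : Set (Fin d → ℤ)))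
            = (A' : Set (Fin d → ℝ)) := by
          rw [hA', Finset.coe_image]
          rfl
        rw [himg, direction_affineSpan] at hrank
        rw [hrank, hfinrankPi]
      have hsuptop : V ⊔ Submodule.span ℝ {v} = ⊤ :=
        top_le_iff.1 (htop ▸ hspan)
      have h2 : Module.finrank ℝ ↥(V ⊔ Submodule.span ℝ ({v} : Set (Fin d → ℝ))) = d := by
        rw [hsuptop, finrank_top, hfinrankPi]
      have h3 : Module.finrank ℝ ↥V ≤ (N p).card := by
        have := finrank_span_finset_le_card (R := ℝ) ((N p).image (fun q => q - p))
        rw [Set.finrank] at this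
        exact le_trans this Finset.card_image_le
      have h4 : Module.finrank ℝ ↥(Submodule.span ℝ ({v} : Set (Fin d → ℝ))) = 1 :=
        finrank_span_singleton hv
      have h5 := Submodule.finrank_sup_add_finrank_inf_eq V (Submodule.span ℝ ({v} : Set (Fin d → ℝ)))
      rw [h2, h4] at h5
      linarith
    -- pick exactly d - 1 neighbours for each part
    have pickEx : ∀ p : Fin d → ℝ, ∃ Q : Finset (Fin d → ℝ), p ∈ P → Q ⊆ N p ∧ Q.card = d - 1 := by
      intro p
      by_cases hp : p ∈ P
      · obtain ⟨Q, hQ1, hQ2⟩ := Finset.exists_subset_card_eq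
          (show d - 1 ≤ (N p).card from Nat.sub_le_iff_le_add.2 (hdeg p hp))
        exact ⟨Q, fun _ => ⟨hQ1, hQ2⟩⟩
      · exact ⟨∅, fun h => absurd h hp⟩
    choose Np hNp using pickEx
    -- index sets of fibers used
    set Dl : Finset (Fin d → ℝ) := P.image (fun p => p + p) with hDl
    set De : Finset (Fin d → ℝ) := P.biUnion (fun p => (Np p).image (fun q => p + q)) with hDe
    have hDemem : ∀ σ ∈ De, ∃ p ∈ P, ∃ q ∈ Np p, p + q = σ := by
      intro σ hσ
      obtain ⟨p, hp, hq⟩ := Finset.mem_biUnion.1 hσ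
      obtain ⟨q, hq2, hq3⟩ := Finset.mem_image.1 hq
      exact ⟨p, hp, q, hq2, hq3⟩
    have hNpP : ∀ p ∈ P, ∀ q ∈ Np p, q ∈ P ∧ q ≠ p ∧ (pr (p + q) = (p, q) ∨ pr (p + q) = (q, p)) := by
      intro p hp q hq
      have := (hNp p hp).1 hq
      rw [hN, Finset.mem_filter] at this
      exact ⟨this.1, this.2⟩
    -- good sigmas
    have hgood : ∀ σ, ((σ ∈ Dl) ∨ (σ ∈ De)) → (pairs σ).Nonempty ∧
        (pr σ).1 ∈ P ∧ (pr σ).2 ∈ P ∧ (pr σ).1 + (pr σ).2 = σ := by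
      intro σ hσ
      have hne : (pairs σ).Nonempty := by
        rcases hσ with h | h
        · obtain ⟨p, hp, rfl⟩ := Finset.mem_image.1 h
          exact hpairsne p hp p hp
        · obtain ⟨p, hp, q, hq, rfl⟩ := hDemem σ h
          exact hpairsne p hp q ((hNpP p hp q hq).1)
      have := (hmempairs σ (pr σ)).1 (hpr σ hne).1
      exact ⟨hne, this⟩
    -- the contribution sets
    set F : (Fin d → ℝ) → Finset (Fin d → ℝ) := fun σ =>
      ((C (pr σ).1).image (fun c => c + um (pr σ).2)) ∪
        ((C (pr σ).2).image (fun c => c + wm (pr σ).1)) with hF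
    have hFfiber : ∀ σ, (pr σ).1 ∈ P → (pr σ).2 ∈ P → (pr σ).1 + (pr σ).2 = σ →
        ∀ z ∈ F σ, π z = σ := by
      intro σ h1 h2 h3 z hz
      rw [hF] at hz
      rcases Finset.mem_union.1 hz with h | h
      · obtain ⟨c, hc2, rfl⟩ := Finset.mem_image.1 h
        rw [hπadd, hCπ _ c hc2, hCπ _ _ (humem _ h2), h3]
      · obtain ⟨c, hc2, rfl⟩ := Finset.mem_image.1 h
        rw [hπadd, hCπ _ c hc2, hCπ _ _ (hwmem _ h1)]
        rw [add_comm]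
        exact h3
    have hFsub : ∀ σ, (pr σ).1 ∈ P → (pr σ).2 ∈ P → F σ ⊆ A' + B' := by
      intro σ h1 h2 z hz
      rw [hF] at hz
      rcases Finset.mem_union.1 hz with h | h
      · obtain ⟨c, hc2, rfl⟩ := Finset.mem_image.1 h
        exact Finset.mem_add.2 ⟨c, hCsub _ hc2, um (pr σ).2, humB _ h2, rfl⟩
      · obtain ⟨c, hc2, rfl⟩ := Finset.mem_image.1 h
        exact Finset.mem_add.2 ⟨c, hCsub _ hc2, wm (pr σ).1, hwmB _ h1, rfl⟩
    have hFcard : ∀ σ, (pr σ).1 ∈ P → (pr σ).2 ∈ P → (pr σ).1 + (pr σ).2 = σ →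
        (C (pr σ).1).card + (C (pr σ).2).card ≤ (F σ).card + 1 := by
      intro σ h1 h2 h3
      have hinj1 : ((C (pr σ).1).image (fun c => c + um (pr σ).2)).card = (C (pr σ).1).card :=
        Finset.card_image_of_injective _ (add_left_injective _)
      have hinj2 : ((C (pr σ).2).image (fun c => c + wm (pr σ).1)).card = (C (pr σ).2).card :=
        Finset.card_image_of_injective _ (add_left_injective _)
      rw [← hinj1, ← hinj2, hF]
      apply card_union_lb
      apply Finset.card_le_one.2
      intro a1 ha1 a2 ha2
      have key : ∀ z ∈ ((C (pr σ).1).image (fun c => c + um (pr σ).2)) ∩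
          ((C (pr σ).2).image (fun c => c + wm (pr σ).1)),
          z = σ + (hc (um (pr σ).2) + hc (wm (pr σ).1)) • v := by
        intro z hz
        have hzu := Finset.mem_inter.1 hz
        obtain ⟨c1, hc1m, he1⟩ := Finset.mem_image.1 hzu.1
        obtain ⟨c2, hc2m, he2⟩ := Finset.mem_image.1 hzu.2
        have hπz : π z = σ := by
          apply hFfiber σ h1 h2 h3
          rw [hF]
          exact Finset.mem_union.1 (Finset.mem_union_left _ hzu.1) |>.elim
            (fun h => Finset.mem_union_left _ h) (fun h => Finset.mem_union_right _ h)
        have hhz1 : hc z ≤ hc (wm (pr σ).1) + hc (um (pr σ).2) := by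
          rw [← he1, hcadd]
          have := hwmax _ h1 c1 hc1m
          linarith
        have hhz2 : hc (um (pr σ).2) + hc (wm (pr σ).1) ≤ hc z := by
          rw [← he2, hcadd]
          have := humin _ h2 c2 hc2m
          linarith
        have hhz : hc z = hc (um (pr σ).2) + hc (wm (pr σ).1) := by linarith
        calc z = π z + hc z • v := hdecomp z
          _ = σ + (hc (um (pr σ).2) + hc (wm (pr σ).1)) • v := by rw [hπz, hhz]
      rw [key a1 ha1, key a2 ha2]
    -- disjointness of loops and edges
    have hDlDe : Disjoint Dl De := by
      rw [Finset.disjoint_left]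
      intro σ hl he
      obtain ⟨p0, hp0, hσ0⟩ := Finset.mem_image.1 hl
      obtain ⟨p, hp, q, hq, hσ1⟩ := hDemem σ he
      obtain ⟨hqP, hqne, hpr2⟩ := hNpP p hp q hq
      have hl0 : pr σ = (p0, p0) := by rw [← hσ0]; exact prloop p0 hp0
      rw [← hσ1] at hl0
      rcases hpr2 with h | h <;> rw [h] at hl0
      · obtain ⟨e1, e2⟩ := Prod.ext_iff.1 hl0
        exact hqne (e2.trans e1.symm)
      · obtain ⟨e1, e2⟩ := Prod.ext_iff.1 hl0
        exact hqne (e1.trans e2.symm)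
    set D : Finset (Fin d → ℝ) := Dl ∪ De with hD
    have hDgood : ∀ σ ∈ D, (pairs σ).Nonempty ∧
        (pr σ).1 ∈ P ∧ (pr σ).2 ∈ P ∧ (pr σ).1 + (pr σ).2 = σ := by
      intro σ hσ
      exact hgood σ (Finset.mem_union.1 hσ)
    -- total count
    have hcount : ∑ σ ∈ D, (F σ).card ≤ (A' + B').card := by
      have hdisjF : ∀ σ ∈ D, ∀ σ' ∈ D, σ ≠ σ' → Disjoint (F σ) (F σ') := by
        intro σ hσ σ' hσ' hnee
        rw [Finset.disjoint_left]
        intro z hz hz'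
        obtain ⟨-, g1, g2, g3⟩ := hDgood σ hσ
        obtain ⟨-, g1', g2', g3'⟩ := hDgood σ' hσ'
        exact hnee ((hFfiber σ g1 g2 g3 z hz).symm.trans (hFfiber σ' g1' g2' g3' z hz'))
      rw [← Finset.card_biUnion hdisjF]
      apply Finset.card_le_card
      apply Finset.biUnion_subset.2
      intro σ hσ
      obtain ⟨-, g1, g2, -⟩ := hDgood σ hσ
      exact hFsub σ g1 g2
    -- loop contribution
    have hDlsum : ∑ p ∈ P, 2 * (C p).card ≤ (∑ σ ∈ Dl, (F σ).card) + P.card := by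
      have hinj2 : ∀ p ∈ P, ∀ p' ∈ P, p + p = p' + p' → p = p' := by
        intro p _ p' _ h
        funext j
        have := congrFun h j
        simp only [Pi.add_apply] at this
        linarith
      rw [hDl, Finset.sum_image hinj2]
      have hle : ∀ p ∈ P, 2 * (C p).card ≤ (F (p + p)).card + 1 := by
        intro p hp
        have := hFcard (p + p)
        rw [prloop p hp] at this
        have := this hp hp rfl
        linarith [this]
      calc ∑ p ∈ P, 2 * (C p).card ≤ ∑ p ∈ P, ((F (p + p)).card + 1) := Finset.sum_le_sum hle
        _ = (∑ p ∈ P, (F (p + p)).card) + P.card := by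
          rw [Finset.sum_add_distrib, Finset.sum_const, smul_eq_mul, mul_one]
    -- edge contribution
    set T : Finset ((Fin d → ℝ) × (Fin d → ℝ)) :=
      P.biUnion (fun p => (Np p).image (fun q => (p, q))) with hT
    have hTmem : ∀ t ∈ T, t.1 ∈ P ∧ t.2 ∈ Np t.1 := by
      intro t ht
      obtain ⟨p, hp, ht2⟩ := Finset.mem_biUnion.1 ht
      obtain ⟨q, hq, rfl⟩ := Finset.mem_image.1 ht2
      exact ⟨hp, hq⟩
    have hmaps : ∀ t ∈ T, t.1 + t.2 ∈ De := by
      intro t ht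
      obtain ⟨h1, h2⟩ := hTmem t ht
      exact Finset.mem_biUnion.2 ⟨t.1, h1, Finset.mem_image.2 ⟨t.2, h2, rfl⟩⟩
    have hDesum : ∑ t ∈ T, ((C t.1).card - 1) ≤ ∑ σ ∈ De, (F σ).card := by
      rw [← Finset.sum_fiberwise_of_maps_to hmaps (fun t => (C t.1).card - 1)]
      apply Finset.sum_le_sum
      intro σ hσ
      obtain ⟨hpne, hprP1, hprP2, hprsum⟩ := hgood σ (Or.inr hσ)
      have hXYne : (pr σ).1 ≠ (pr σ).2 := by
        obtain ⟨p, hp, q, hq, hσ1⟩ := hDemem σ hσ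
        obtain ⟨hqP, hqne, hpr2⟩ := hNpP p hp q hq
        rw [hσ1] at hpr2
        rcases hpr2 with h | h <;> rw [h] <;> simp
        · exact fun hpq => hqne hpq.symm
        · exact hqne
      have hsubpair : T.filter (fun t => t.1 + t.2 = σ) ⊆
          {((pr σ).1, (pr σ).2), ((pr σ).2, (pr σ).1)} := by
        intro t ht
        obtain ⟨htT, htσ⟩ := Finset.mem_filter.1 ht
        obtain ⟨h1, h2⟩ := hTmem t htT
        obtain ⟨hqP, hqne, hpr2⟩ := hNpP t.1 h1 t.2 h2
        rw [htσ] at hpr2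
        rcases hpr2 with h | h
        · rw [Finset.mem_insert]
          left
          rw [h]
        · rw [Finset.mem_insert, Finset.mem_singleton]
          right
          rw [h]
      have hsum_le : ∑ t ∈ T.filter (fun t => t.1 + t.2 = σ), ((C t.1).card - 1)
          ≤ ∑ t ∈ ({((pr σ).1, (pr σ).2), ((pr σ).2, (pr σ).1)} :
              Finset ((Fin d → ℝ) × (Fin d → ℝ))), ((C t.1).card - 1) :=
        Finset.sum_le_sum_of_subset hsubpair
      have hpairne : (((pr σ).1, (pr σ).2) : (Fin d → ℝ) × (Fin d → ℝ))
          ≠ ((pr σ).2, (pr σ).1) := by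
        intro h
        exact hXYne (Prod.ext_iff.1 h).1
      have hsum_pair : ∑ t ∈ ({((pr σ).1, (pr σ).2), ((pr σ).2, (pr σ).1)} :
          Finset ((Fin d → ℝ) × (Fin d → ℝ))), ((C t.1).card - 1)
          = ((C (pr σ).1).card - 1) + ((C (pr σ).2).card - 1) := by
        rw [Finset.sum_pair hpairne]
      have hF1 := hFcard σ hprP1 hprP2 hprsum
      have hc1 := hn1 _ hprP1
      have hc2 := hn1 _ hprP2
      calc ∑ t ∈ T.filter (fun t => t.1 + t.2 = σ), ((C t.1).card - 1)
          ≤ ((C (pr σ).1).card - 1) + ((C (pr σ).2).card - 1) := by rw [← hsum_pair]; exact hsum_le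
        _ ≤ (F σ).card := by
            have e1 : (C (pr σ).1).card - 1 + 1 = (C (pr σ).1).card :=
              Nat.succ_pred_eq_of_pos hc1
            have e2 : (C (pr σ).2).card - 1 + 1 = (C (pr σ).2).card :=
              Nat.succ_pred_eq_of_pos hc2
            linarith [hF1, e1, e2]
    have hTdisj : Set.PairwiseDisjoint (↑P : Set (Fin d → ℝ))
        (fun p => (Np p).image (fun q => ((p, q) : (Fin d → ℝ) × (Fin d → ℝ)))) := by
      intro p hp p' hp' hne
      rw [Function.onFun, Finset.disjoint_left]
      intro t ht ht'
      obtain ⟨q, hq, hqe⟩ := Finset.mem_image.1 ht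
      obtain ⟨q', hq', he⟩ := Finset.mem_image.1 ht'
      rw [← hqe] at he
      injection he with h1 h2
      exact hne h1.symm
    clear_value φ A' hc π P C um wm B B' dsq pairs N Dl De D F T
    have hTsum : ∑ t ∈ T, ((C t.1).card - 1) = ∑ p ∈ P, (d - 1) * ((C p).card - 1) := by
      rw [hT, Finset.sum_biUnion hTdisj]
      apply Finset.sum_congr rfl
      intro p hp
      rw [Finset.sum_image (by intro a _ b _ h; injection h with h1 h2)]
      have hcongr : ∑ q ∈ Np p, ((C (((p, q) : (Fin d → ℝ) × (Fin d → ℝ))).1).card - 1)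
          = ∑ _q ∈ Np p, ((C p).card - 1) :=
        Finset.sum_congr rfl (fun q _ => rfl)
      rw [hcongr, Finset.sum_const, (hNp p hp).2, smul_eq_mul]
    -- grand inequality over ℕ
    have hgrand : (d + 1) * A'.card ≤ (A' + B').card + d * P.card := by
      have hsplit : ∑ σ ∈ D, (F σ).card = (∑ σ ∈ Dl, (F σ).card) + ∑ σ ∈ De, (F σ).card := by
        rw [hD, Finset.sum_union hDlDe]
      have e3 : ∀ p ∈ P, (d - 1) * (C p).card ≤ (d - 1) * ((C p).card - 1) + (d - 1) := by
        intro p hp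
        have e4 : (C p).card - 1 + 1 = (C p).card := Nat.succ_pred_eq_of_pos (hn1 p hp)
        calc (d - 1) * (C p).card = (d - 1) * (((C p).card - 1) + 1) := by rw [e4]
          _ = (d - 1) * ((C p).card - 1) + (d - 1) := by ring
          _ ≤ (d - 1) * ((C p).card - 1) + (d - 1) := le_rfl
      have hstep : ∑ p ∈ P, (d - 1) * (C p).card
          ≤ (∑ p ∈ P, (d - 1) * ((C p).card - 1)) + (d - 1) * P.card := by
        calc ∑ p ∈ P, (d - 1) * (C p).card
            ≤ ∑ p ∈ P, ((d - 1) * ((C p).card - 1) + (d - 1)) := Finset.sum_le_sum e3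
          _ = (∑ p ∈ P, (d - 1) * ((C p).card - 1)) + (d - 1) * P.card := by
              rw [Finset.sum_add_distrib, Finset.sum_const, smul_eq_mul, mul_comm]
      have hdsum : d + 1 = 2 + (d - 1) := by
        have : d - 1 + 1 = d := Nat.succ_pred_eq_of_pos hdpos
        linarith [this]
      have hsum2 : (d + 1) * A'.card
          = (∑ p ∈ P, 2 * (C p).card) + ∑ p ∈ P, (d - 1) * (C p).card := by
        rw [← hsumn, ← Finset.sum_add_distrib, Finset.mul_sum]
        apply Finset.sum_congr rfl
        intro p _
        rw [hdsum]
        ring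
      have hdm : (d - 1) * P.card + P.card = d * P.card := by
        have e5 : d - 1 + 1 = d := Nat.succ_pred_eq_of_pos hdpos
        calc (d - 1) * P.card + P.card = ((d - 1) + 1) * P.card := by ring
          _ = d * P.card := by rw [e5]
      calc (d + 1) * A'.card
          = (∑ p ∈ P, 2 * (C p).card) + ∑ p ∈ P, (d - 1) * (C p).card := hsum2
        _ ≤ ((∑ σ ∈ Dl, (F σ).card) + P.card)
            + ((∑ p ∈ P, (d - 1) * ((C p).card - 1)) + (d - 1) * P.card) :=
              Nat.add_le_add hDlsum hstep
        _ = ((∑ σ ∈ Dl, (F σ).card) + (∑ p ∈ P, (d - 1) * ((C p).card - 1)))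
            + ((d - 1) * P.card + P.card) := by ring
        _ ≤ ((∑ σ ∈ Dl, (F σ).card) + ∑ σ ∈ De, (F σ).card) + d * P.card := by
              rw [hdm]
              refine Nat.add_le_add (Nat.add_le_add_left ?_ _) le_rfl
              rw [← hTsum]
              exact hDesum
        _ = (∑ σ ∈ D, (F σ).card) + d * P.card := by rw [hsplit]
        _ ≤ (A' + B').card + d * P.card := Nat.add_le_add hcount le_rfl
    -- choose the enumeration of B
    obtain ⟨p₀, hp₀⟩ := hPne
    have hBne : B.Nonempty := ⟨(zz p₀).1, by rw [hB]; exact Finset.mem_biUnion.2 ⟨p₀, hp₀, by simp⟩⟩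
    obtain ⟨b₀, hb₀⟩ := hBne
    have hr1 : 1 ≤ r := le_trans hdpos hdr
    have hBcards : B.card ≤ 3 * d * r ^ 2 := by
      have h2 : 2 * P.card ≤ 2 * r := by
        exact Nat.mul_le_mul_left 2 hPcard
      have h3 : 2 * r ≤ 3 * d * r ^ 2 := by nlinarith [hdpos, hr1]
      exact le_trans hBcard (le_trans h2 h3)
    set L := B.toList with hL
    have hLlen : L.length = B.card := Finset.length_toList B
    set a : Fin (3 * d * r ^ 2) → (Fin d → ℤ) :=
      fun i => if hi : (i : ℕ) < L.length then L.get ⟨i, hi⟩ else b₀ with ha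
    have haB : ∀ i, a i ∈ B := by
      intro i
      simp only [ha]
      by_cases hi : (i : ℕ) < L.length
      · rw [dif_pos hi]
        exact Finset.mem_toList.1 (List.get_mem L _)
      · rw [dif_neg hi]; exact hb₀
    have haA : ∀ i, a i ∈ A := fun i => hBsubA (haB i)
    have haimg : Finset.image a Finset.univ = B := by
      apply Finset.Subset.antisymm
      · intro z hz
        obtain ⟨i, -, rfl⟩ := Finset.mem_image.1 hz
        exact haB i
      · intro z hz
        have hzL : z ∈ L := Finset.mem_toList.2 hz
        obtain ⟨n, hn⟩ := List.get_of_mem hzL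
        have hn2 : (n : ℕ) < 3 * d * r ^ 2 := lt_of_lt_of_le n.2 (by rw [hLlen]; exact hBcards)
        refine Finset.mem_image.2 ⟨⟨(n : ℕ), hn2⟩, Finset.mem_univ _, ?_⟩
        simp only [ha]
        have hilt : ((⟨(n : ℕ), hn2⟩ : Fin (3 * d * r ^ 2)) : ℕ) < L.length := n.2
        rw [dif_pos hilt, ← hn]
    refine ⟨a, haA, ?_⟩
    rw [haimg]
    have himgadd : (A + B).image φ = A' + B' := by
      rw [hA', hB']
      exact Finset.image_add φ
    have hmr : d * P.card ≤ 3 * d * r := by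
      calc d * P.card ≤ d * r := Nat.mul_le_mul_left d hPcard
        _ ≤ 3 * d * r := by nlinarith [hr1, hdpos]
    have h1 : (d + 1) * A.card ≤ (A + B).card + 3 * d * r := by
      rw [← hA'card]
      calc (d + 1) * A'.card ≤ (A' + B').card + d * P.card := hgrand
        _ ≤ (A' + B').card + 3 * d * r := Nat.add_le_add_left hmr _
        _ = (A + B).card + 3 * d * r := by
            rw [← himgadd, Finset.card_image_of_injective _ hφinj]
    have hcast : ((d : ℤ) + 1) * (A.card : ℤ) ≤ ((A + B).card : ℤ) + 3 * (d : ℤ) * (r : ℤ) := by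
      exact_mod_cast h1
    linarith [hcast]
end

section
/- Let G be a connected compact group with normalized Haar measure μ, let A, B ⊆ G be compact sets with μ(B) > 0, and let X ⊆ G be a measurable set such that for every a ∈ A, μ((a·B) \ X) ≥ m for some m ≥ 0. Then there exists b ∈ B such that μ((A·b) \ X) ≥ m·μ(A)/μ(B). -/
open Pointwise MeasureTheory
open scoped ENNReal

theorem stmt_7 {G : Type*} [Group G] [TopologicalSpace G] [IsTopologicalGroup G]
    [CompactSpace G] [ConnectedSpace G] [MeasurableSpace G] [BorelSpace G]
    (μ : Measure G) [μ.IsHaarMeasure] [IsProbabilityMeasure μ]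
    (A B : Set G) (hA : IsCompact A) (hB : IsCompact B) (hμB : 0 < μ B)
    (X : Set G) (hX : MeasurableSet X) (m : ℝ) (hm : 0 ≤ m)
    (h : ∀ a ∈ A, m ≤ (μ (({a} * B) \ X)).toReal) :
    ∃ b ∈ B, m * (μ A).toReal / (μ B).toReal ≤ (μ ((A * {b}) \ X)).toReal := by
  -- μ is right invariant by uniqueness of Haar measure on a compact group
  have hright : μ.IsMulRightInvariant := by
    constructor
    intro g
    set ν : Measure G := μ.map (· * g) with hν
    have hmg : Measurable (· * g) := (continuous_mul_right g).measurable
    have : IsProbabilityMeasure ν := Measure.isProbabilityMeasure_map hmg.aemeasurable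
    have hsc : ν = Measure.haarScalarFactor ν μ • μ :=
      Measure.isMulInvariant_eq_smul_of_compactSpace ν μ
    have huniv := congrArg (fun m : Measure G => m Set.univ) hsc
    simp only [measure_univ, Measure.smul_apply, smul_eq_mul, mul_one,
      ENNReal.smul_def] at huniv
    rw [hsc]
    ext s hs
    simp [ENNReal.smul_def, ← huniv]
  -- key : removing a measurable set from a compact set or its closure gives the same measure
  have key : ∀ S : Set G, IsCompact S → μ (closure S \ X) = μ (S \ X) := by
    intro S hS
    refine le_antisymm ?_ (measure_mono (Set.diff_subset_diff_left subset_closure))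
    have hsub : closure S ⊆ toMeasurable μ (S \ X) ∪ X :=
      hS.closure_subset_measurableSet ((measurableSet_toMeasurable _ _).union hX)
        (fun x hx => by
          by_cases hxX : x ∈ X
          · exact Or.inr hxX
          · exact Or.inl (subset_toMeasurable _ _ ⟨hx, hxX⟩))
    calc μ (closure S \ X) ≤ μ (toMeasurable μ (S \ X)) := by
          refine measure_mono fun x hx => ?_
          rcases hsub hx.1 with h' | h'
          · exact h'
          · exact absurd h' hx.2
      _ = μ (S \ X) := measure_toMeasurable _
  set A' := closure A with hA'def
  set B' := closure B with hB'def
  have hA' : IsCompact A' := isClosed_closure.isCompact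
  have hB' : IsCompact B' := isClosed_closure.isCompact
  have hAm : MeasurableSet A' := measurableSet_closure
  have hBm : MeasurableSet B' := measurableSet_closure
  have hμA'eq : μ A' = μ A := hA.measure_closure μ
  have hμB'eq : μ B' = μ B := hB.measure_closure μ
  -- the hypothesis transfers to the closures
  have h' : ∀ a ∈ A', ENNReal.ofReal m ≤ μ (({a} * B') \ X) := by
    intro a ha
    rw [hA'def, hA.closure_eq_biUnion_inseparable] at ha
    simp only [Set.mem_iUnion, Set.mem_setOf_eq] at ha
    obtain ⟨a₀, ha₀A, hins⟩ := ha
    have hsub : ({a₀} * B) \ X ⊆ closure ({a} * B') \ X := by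
      rintro x ⟨hx, hxX⟩
      refine ⟨?_, hxX⟩
      rw [Set.singleton_mul] at hx
      obtain ⟨b, hb, rfl⟩ := hx
      have h1 : a₀ * b ∈ closure {a * b} :=
        ((hins.symm.mul (Inseparable.refl b)).specializes).mem_closure
      refine closure_mono (Set.singleton_subset_iff.2 ?_) h1
      rw [Set.singleton_mul]
      exact ⟨b, subset_closure hb, rfl⟩
    have hle : μ (({a₀} * B) \ X) ≤ μ (({a} * B') \ X) := by
      rw [← key _ (isCompact_singleton.mul hB')]
      exact measure_mono hsub
    exact le_trans (ENNReal.ofReal_le_of_le_toReal (h a₀ ha₀A)) hle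
  -- the key indicator function
  set f : G → G → ℝ≥0∞ := fun a b => Xᶜ.indicator 1 (a * b) with hf
  -- composing an indicator with left/right translations
  have hcompL : ∀ (S : Set G) (a : G),
      (fun b => S.indicator (1 : G → ℝ≥0∞) (a * b)) = ((a * ·) ⁻¹' S).indicator 1 := by
    intro S a
    funext b
    by_cases hb : a * b ∈ S <;> simp [Set.indicator_apply, hb]
  have hcompR : ∀ (S : Set G) (b : G),
      (fun a => S.indicator (1 : G → ℝ≥0∞) (a * b)) = ((· * b) ⁻¹' S).indicator 1 := by
    intro S b
    funext a
    by_cases ha : a * b ∈ S <;> simp [Set.indicator_apply, ha]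
  have lemL : ∀ (S : Set G), MeasurableSet S → ∀ a : G,
      ∫⁻ b, S.indicator (1 : G → ℝ≥0∞) (a * b) ∂μ = μ S := by
    intro S hS a
    rw [hcompL S a, lintegral_indicator_one (hS.preimage (continuous_mul_left a).measurable),
      measure_preimage_mul]
  have lemR : ∀ (S : Set G), MeasurableSet S → ∀ b : G,
      ∫⁻ a, S.indicator (1 : G → ℝ≥0∞) (a * b) ∂μ = μ S := by
    intro S hS b
    rw [hcompR S b, lintegral_indicator_one (hS.preimage (continuous_mul_right b).measurable),
      measure_preimage_mul_right]
  -- left slice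
  have keyA : ∀ a : G, μ (({a} * B') \ X) = ∫⁻ b in B', f a b ∂μ := by
    intro a
    have hset : ({a} * B') \ X = (fun x => a⁻¹ * x) ⁻¹' (B' ∩ (fun b => a * b) ⁻¹' Xᶜ) := by
      ext x
      simp only [Set.mem_diff, Set.singleton_mul, Set.mem_image, Set.mem_preimage,
        Set.mem_inter_iff, Set.mem_compl_iff]
      constructor
      · rintro ⟨⟨b, hb, rfl⟩, hx⟩
        simpa [mul_assoc] using ⟨hb, hx⟩
      · rintro ⟨hb, hx⟩
        exact ⟨⟨a⁻¹ * x, hb, by group⟩, by simpa [mul_assoc] using hx⟩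
    rw [hset, measure_preimage_mul μ a⁻¹ _]
    have heq : ∫⁻ b in B', f a b ∂μ
        = ∫⁻ b, (B' ∩ (fun b => a * b) ⁻¹' Xᶜ).indicator 1 b ∂μ := by
      rw [← lintegral_indicator hBm]
      congr 1
      funext b
      by_cases hb : b ∈ B' <;> by_cases hx : a * b ∈ X <;>
        simp [hf, Set.indicator_apply, hb, hx]
    rw [heq, lintegral_indicator_one
      (hBm.inter (hX.compl.preimage (continuous_mul_left a).measurable))]
  -- right slice
  have keyB : ∀ b : G, μ ((A' * {b}) \ X) = ∫⁻ a in A', f a b ∂μ := by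
    intro b
    have hset : (A' * {b}) \ X = (fun x => x * b⁻¹) ⁻¹' (A' ∩ (fun a => a * b) ⁻¹' Xᶜ) := by
      ext x
      simp only [Set.mem_diff, Set.mul_singleton, Set.mem_image, Set.mem_preimage,
        Set.mem_inter_iff, Set.mem_compl_iff]
      constructor
      · rintro ⟨⟨a, ha, rfl⟩, hx⟩
        simpa using ⟨ha, hx⟩
      · rintro ⟨ha, hx⟩
        exact ⟨⟨x * b⁻¹, ha, by group⟩, by simpa using hx⟩
    rw [hset, measure_preimage_mul_right μ b⁻¹ _]
    have heq : ∫⁻ a in A', f a b ∂μ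
        = ∫⁻ a, (A' ∩ (fun a => a * b) ⁻¹' Xᶜ).indicator 1 a ∂μ := by
      rw [← lintegral_indicator hAm]
      congr 1
      funext a
      by_cases ha : a ∈ A' <;> by_cases hx : a * b ∈ X <;>
        simp [hf, Set.indicator_apply, ha, hx]
    rw [heq, lintegral_indicator_one
      (hAm.inter (hX.compl.preimage (continuous_mul_right b).measurable))]
  -- the Fubini-type swap, proved by approximating the indicator of Xᶜ by continuous functions
  have hswap : ∫⁻ a in A', ∫⁻ b in B', f a b ∂μ ∂μ ≤ ∫⁻ b in B', ∫⁻ a in A', f a b ∂μ ∂μ := by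
    apply ENNReal.le_of_forall_pos_le_add
    intro ε hε _
    have hδ : ((ε : ℝ≥0∞) / 2) ≠ 0 := by
      simp [ENNReal.div_eq_zero_iff, hε.ne']
    have hY : MeasurableSet Xᶜ := hX.compl
    obtain ⟨U, hYU, hUopen, -, hUY⟩ := hY.exists_isOpen_diff_lt (measure_ne_top μ _) hδ
    obtain ⟨F, hFY, hFclosed, hYF⟩ := hY.exists_isClosed_diff_lt (measure_ne_top μ _) hδ
    obtain ⟨γ, hγ0, hγ1, hγ01⟩ := exists_continuous_zero_one_of_isClosed
      hUopen.isClosed_compl hFclosed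
      (Set.disjoint_left.2 fun x hx hxF => hx (hYU (hFY hxF)))
    set g : G → G → ℝ≥0∞ := fun a b => ENNReal.ofReal (γ (a * b)) with hg
    have hgmeas : Measurable (Function.uncurry g) := by
      have hcont : Continuous (fun p : G × G => γ (p.1 * p.2)) :=
        γ.continuous.comp continuous_mul
      have hcs : HasCompactSupport (fun p : G × G => γ (p.1 * p.2)) :=
        (isClosed_tsupport _).isCompact
      exact ENNReal.measurable_ofReal.comp (hcs.stronglyMeasurable_of_prod hcont).measurable
    have hg1 : ∀ a b, g a b ≤ 1 := fun a b =>
      ENNReal.ofReal_le_one.2 (hγ01 (a * b)).2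
    have hfle1 : ∀ a b : G, f a b ≤ 1 := fun a b => by
      by_cases hx : a * b ∈ Xᶜ <;> simp [hf, Set.indicator_apply, hx]
    -- pointwise comparisons
    have hfg : ∀ a b, f a b ≤ g a b + (Xᶜ \ F).indicator 1 (a * b) := by
      intro a b
      by_cases hab : a * b ∈ Xᶜ
      · by_cases habF : a * b ∈ F
        · have h1 : γ (a * b) = 1 := hγ1 habF
          have : (1 : ℝ≥0∞) ≤ g a b := by simp [hg, h1]
          calc f a b ≤ 1 := hfle1 a b
            _ ≤ g a b + _ := le_trans this le_self_add
        · have h2 : (Xᶜ \ F).indicator (1 : G → ℝ≥0∞) (a * b) = 1 :=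
            Set.indicator_of_mem (show a * b ∈ Xᶜ \ F from ⟨hab, habF⟩) 1
          calc f a b ≤ 1 := hfle1 a b
            _ ≤ g a b + _ := by rw [h2]; exact le_add_self
      · simp [hf, Set.indicator_apply, hab]
    have hgf : ∀ a b, g a b ≤ f a b + (U \ Xᶜ).indicator 1 (a * b) := by
      intro a b
      by_cases hab : a * b ∈ Xᶜ
      · have : (1 : ℝ≥0∞) ≤ f a b := by simp [hf, Set.indicator_apply, hab]
        exact le_trans (hg1 a b) (le_trans this le_self_add)
      · by_cases habU : a * b ∈ U
        · have h1 : (U \ Xᶜ).indicator (1 : G → ℝ≥0∞) (a * b) = 1 :=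
            Set.indicator_of_mem (show a * b ∈ U \ Xᶜ from ⟨habU, hab⟩) 1
          rw [h1]
          exact le_trans (hg1 a b) le_add_self
        · have : γ (a * b) = 0 := hγ0 habU
          simp [hg, this]
    calc ∫⁻ a in A', ∫⁻ b in B', f a b ∂μ ∂μ
        ≤ ∫⁻ a in A', (∫⁻ b in B', g a b ∂μ + (ε : ℝ≥0∞) / 2) ∂μ := by
          refine lintegral_mono fun a => ?_
          calc ∫⁻ b in B', f a b ∂μ
              ≤ ∫⁻ b in B', (g a b + (Xᶜ \ F).indicator 1 (a * b)) ∂μ :=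
                lintegral_mono fun b => hfg a b
            _ = ∫⁻ b in B', g a b ∂μ + ∫⁻ b in B', (Xᶜ \ F).indicator 1 (a * b) ∂μ :=
                lintegral_add_left (ENNReal.measurable_ofReal.comp
                  (γ.continuous.comp (continuous_mul_left a)).measurable) _
            _ ≤ ∫⁻ b in B', g a b ∂μ + (ε : ℝ≥0∞) / 2 := by
                gcongr
                calc ∫⁻ b in B', (Xᶜ \ F).indicator 1 (a * b) ∂μ
                    ≤ ∫⁻ b, (Xᶜ \ F).indicator 1 (a * b) ∂μ :=
                      setLIntegral_le_lintegral _ _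
                  _ = μ (Xᶜ \ F) := lemL _ (hY.diff hFclosed.measurableSet) a
                  _ ≤ (ε : ℝ≥0∞) / 2 := hYF.le
      _ = ∫⁻ a in A', ∫⁻ b in B', g a b ∂μ ∂μ + (ε : ℝ≥0∞) / 2 * μ A' := by
          rw [lintegral_add_right _ measurable_const, setLIntegral_const]
      _ ≤ ∫⁻ a in A', ∫⁻ b in B', g a b ∂μ ∂μ + (ε : ℝ≥0∞) / 2 := by
          gcongr
          exact mul_le_of_le_one_right zero_le prob_le_one
      _ = ∫⁻ b in B', ∫⁻ a in A', g a b ∂μ ∂μ + (ε : ℝ≥0∞) / 2 := by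
          rw [lintegral_lintegral_swap hgmeas.aemeasurable]
      _ ≤ (∫⁻ b in B', ∫⁻ a in A', f a b ∂μ ∂μ + (ε : ℝ≥0∞) / 2) + (ε : ℝ≥0∞) / 2 := by
          gcongr ?_ + _
          calc ∫⁻ b in B', ∫⁻ a in A', g a b ∂μ ∂μ
              ≤ ∫⁻ b in B', (∫⁻ a in A', f a b ∂μ + (ε : ℝ≥0∞) / 2) ∂μ := by
                refine lintegral_mono fun b => ?_
                calc ∫⁻ a in A', g a b ∂μ
                    ≤ ∫⁻ a in A', (f a b + (U \ Xᶜ).indicator 1 (a * b)) ∂μ :=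
                      lintegral_mono fun a => hgf a b
                  _ = ∫⁻ a in A', f a b ∂μ + ∫⁻ a in A', (U \ Xᶜ).indicator 1 (a * b) ∂μ := by
                      rw [lintegral_add_right]
                      rw [hcompR]
                      exact measurable_const.indicator
                        ((hUopen.measurableSet.diff hY).preimage
                          (continuous_mul_right b).measurable)
                  _ ≤ ∫⁻ a in A', f a b ∂μ + (ε : ℝ≥0∞) / 2 := by
                      gcongr
                      calc ∫⁻ a in A', (U \ Xᶜ).indicator 1 (a * b) ∂μ
                          ≤ ∫⁻ a, (U \ Xᶜ).indicator 1 (a * b) ∂μ :=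
                            setLIntegral_le_lintegral _ _
                        _ = μ (U \ Xᶜ) := lemR _ (hUopen.measurableSet.diff hY) b
                        _ ≤ (ε : ℝ≥0∞) / 2 := hUY.le
              _ = ∫⁻ b in B', ∫⁻ a in A', f a b ∂μ ∂μ + (ε : ℝ≥0∞) / 2 * μ B' := by
                rw [lintegral_add_right _ measurable_const, setLIntegral_const]
              _ ≤ ∫⁻ b in B', ∫⁻ a in A', f a b ∂μ ∂μ + (ε : ℝ≥0∞) / 2 := by
                gcongr
                exact mul_le_of_le_one_right zero_le prob_le_one
      _ = ∫⁻ b in B', ∫⁻ a in A', f a b ∂μ ∂μ + (ε : ℝ≥0∞) := by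
          rw [add_assoc, ENNReal.add_halves]
  -- lower bound
  have hlow : ENNReal.ofReal m * μ A ≤ ∫⁻ b in B', μ ((A' * {b}) \ X) ∂μ := by
    calc ENNReal.ofReal m * μ A = ∫⁻ _ in A', ENNReal.ofReal m ∂μ := by
          rw [setLIntegral_const, hμA'eq]
      _ ≤ ∫⁻ a in A', μ (({a} * B') \ X) ∂μ :=
          setLIntegral_mono_ae' hAm (Filter.Eventually.of_forall fun a ha => h' a ha)
      _ = ∫⁻ a in A', ∫⁻ b in B', f a b ∂μ ∂μ := by
          simp_rw [keyA]
      _ ≤ ∫⁻ b in B', ∫⁻ a in A', f a b ∂μ ∂μ := hswap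
      _ = ∫⁻ b in B', μ ((A' * {b}) \ X) ∂μ := by simp_rw [keyB]
  -- first moment method
  have hfin : ∫⁻ b in B', μ ((A' * {b}) \ X) ∂μ ≠ ⊤ := by
    refine ne_top_of_le_ne_top (by simp : (1 : ℝ≥0∞) * μ B' ≠ ⊤) ?_
    rw [← setLIntegral_const]
    exact setLIntegral_mono_ae' hBm (Filter.Eventually.of_forall fun b _ => prob_le_one)
  have hμB' : μ B' ≠ 0 := by rw [hμB'eq]; exact hμB.ne'
  obtain ⟨b, hbB', hble⟩ := exists_setLAverage_le (μ := μ) (s := B')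
    (f := fun b => μ ((A' * {b}) \ X)) hμB' hBm.nullMeasurableSet hfin
  rw [setLAverage_eq] at hble
  have hkey : ENNReal.ofReal m * μ A / μ B ≤ μ ((A' * {b}) \ X) := by
    refine le_trans ?_ hble
    rw [hμB'eq]
    gcongr
  -- transfer b ∈ B' back to some b₀ ∈ B
  rw [hB'def, hB.closure_eq_biUnion_inseparable] at hbB'
  simp only [Set.mem_iUnion, Set.mem_setOf_eq] at hbB'
  obtain ⟨b₀, hb₀B, hins⟩ := hbB'
  have hsub : A' * {b} ⊆ closure (A * {b₀}) := by
    rintro x hx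
    rw [Set.mul_singleton] at hx
    obtain ⟨a, ha, rfl⟩ := hx
    have hmaps : Set.MapsTo (· * b) A (closure (A * {b₀})) := by
      intro a' ha'
      have h1 : a' * b ∈ closure {a' * b₀} :=
        (((Inseparable.refl a').mul hins).specializes).mem_closure
      refine closure_mono (Set.singleton_subset_iff.2 ?_) h1
      rw [Set.mul_singleton]
      exact ⟨a', ha', rfl⟩
    have := map_mem_closure (continuous_mul_right b) ha hmaps
    rwa [closure_closure] at this
  have hle2 : μ ((A' * {b}) \ X) ≤ μ ((A * {b₀}) \ X) := by
    rw [← key _ (hA.mul isCompact_singleton)]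
    exact measure_mono (Set.diff_subset_diff_left hsub)
  have hfinal : ENNReal.ofReal m * μ A / μ B ≤ μ ((A * {b₀}) \ X) := hkey.trans hle2
  refine ⟨b₀, hb₀B, ?_⟩
  have hne : μ ((A * {b₀}) \ X) ≠ ⊤ := measure_ne_top μ _
  have hmono := ENNReal.toReal_mono hne hfinal
  calc m * (μ A).toReal / (μ B).toReal
      = (ENNReal.ofReal m * μ A / μ B).toReal := by
        rw [ENNReal.toReal_div, ENNReal.toReal_mul, ENNReal.toReal_ofReal hm]
    _ ≤ _ := hmono
end

section
/- Let A, B be finite non-empty subsets of an abelian group G with |A| ≥ |B|, where A ∪ B generates a torsion-free group (e.g. G = ℤ^d or ℝ^d). Then there exist b_1, b_2, b_3 ∈ B such that |A + {b_1, b_2, b_3}| ≥ |A| + |B| - 1. -/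
open Pointwise
open scoped Classical

set_option maxHeartbeats 1000000

lemma blt_zsmul_zero {L : Type*} [AddCommGroup L] [LinearOrder L] [IsOrderedAddMonoid L] {d : L} (hd : 0 < d)
    {k : ℤ} (h1 : -d < k • d) (h2 : k • d < d) : k = 0 := by
  by_contra hk
  rcases lt_or_gt_of_ne hk with hneg | hpos
  · have h : (0:L) ≤ (-k - 1) • d := zsmul_nonneg hd.le (by omega)
    have h2' : (-k - 1) • d = -(k • d) - d := by
      rw [sub_zsmul, neg_zsmul, one_zsmul]; abel
    rw [h2'] at h
    have h3 : k • d ≤ -d := le_neg_of_le_neg (sub_nonneg.1 h)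
    exact absurd h1 (not_lt.2 h3)
  · have h : (0:L) ≤ (k - 1) • d := zsmul_nonneg hd.le (by omega)
    have h2' : (k - 1) • d = k • d - d := by rw [sub_zsmul, one_zsmul]; abel
    rw [h2', sub_nonneg] at h
    exact absurd h2 (not_lt.2 h)

lemma blt_key {L : Type*} [AddCommGroup L] [LinearOrder L] [IsOrderedAddMonoid L] [DecidableEq L] (A B : Finset L)
    (hA : A.Nonempty) (hB : B.Nonempty) (hAB : B.card ≤ A.card) :
    ∃ b₁ ∈ B, ∃ b₂ ∈ B, ∃ b₃ ∈ B,
      (A.card : ℤ) + B.card - 1 ≤ ((A + ({b₁, b₂, b₃} : Finset L)).card : ℤ) := by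
  classical
  have himage : ∀ (S : Finset L) (x : L), S + ({x} : Finset L) = S.image (· + x) := by
    intro S x
    ext y
    simp only [Finset.mem_add, Finset.mem_singleton, Finset.mem_image, exists_eq_left]
  have hsing : ∀ (S : Finset L) (x : L), (S + ({x} : Finset L)).card = S.card := by
    intro S x
    rw [himage]
    exact Finset.card_image_of_injective _ (add_left_injective x)
  have hmemsing : ∀ (S : Finset L) (x y : L), (y ∈ S + ({x} : Finset L)) ↔ ∃ a ∈ S, a + x = y := by
    intro S x y
    rw [himage]
    simp only [Finset.mem_image]
  rcases le_or_gt B.card 1 with hB1 | hB1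
  · obtain ⟨b, hb⟩ := hB
    refine ⟨b, hb, b, hb, b, hb, ?_⟩
    have h1 : B.card = 1 := le_antisymm hB1 (Finset.card_pos.2 ⟨b, hb⟩)
    have hbb : ({b, b, b} : Finset L) = {b} := by simp
    rw [hbb, hsing, h1]
    push_cast; omega
  -- main case
  set b1 := B.min' hB with hb1def
  set b3 := B.max' hB with hb3def
  have hb1B : b1 ∈ B := B.min'_mem hB
  have hb3B : b3 ∈ B := B.max'_mem hB
  have hb13 : b1 < b3 := B.min'_lt_max'_of_card hB1
  set d := b3 - b1 with hddef
  have hd : 0 < d := sub_pos.2 hb13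
  set C := A.filter (fun a => a + d ∉ A) with hCdef
  have hc1 : 1 ≤ C.card := by
    have hmax : A.max' hA ∈ C := by
      rw [hCdef, Finset.mem_filter]
      refine ⟨A.max'_mem hA, fun hmem => ?_⟩
      exact absurd (A.le_max' _ hmem) (not_le.2 (lt_add_of_pos_right _ hd))
    exact Finset.card_pos.2 ⟨_, hmax⟩
  set X := (A + ({b1} : Finset L)) ∪ (A + ({b3} : Finset L)) with hXdef
  have hmemX : ∀ x : L, x ∈ X ↔ (∃ a ∈ A, a + b1 = x) ∨ (∃ a ∈ A, a + b3 = x) := by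
    intro x
    rw [hXdef, Finset.mem_union, hmemsing, hmemsing]
  have hdiff : (A + ({b3} : Finset L)) \ (A + ({b1} : Finset L)) = C.image (· + b3) := by
    ext x
    rw [Finset.mem_sdiff, hmemsing, hmemsing]
    simp only [Finset.mem_image, hCdef, Finset.mem_filter]
    constructor
    · rintro ⟨⟨a, ha, rfl⟩, hnot⟩
      refine ⟨a, ⟨ha, fun hmem => hnot ⟨a + d, hmem, by rw [hddef]; abel⟩⟩, rfl⟩
    · rintro ⟨a, ⟨ha, hnot⟩, rfl⟩
      refine ⟨⟨a, ha, rfl⟩, ?_⟩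
      rintro ⟨a', ha', heq⟩
      apply hnot
      have h2 : a' + b1 = (a + d) + b1 := by rw [heq, hddef]; abel
      rwa [← add_right_cancel h2]
  have hX : X.card = A.card + C.card := by
    have h1 := Finset.card_sdiff_add_card (A + ({b3} : Finset L)) (A + ({b1} : Finset L))
    have h2 : ((A + ({b3} : Finset L)) \ (A + ({b1} : Finset L))).card = C.card := by
      rw [hdiff]
      exact Finset.card_image_of_injective _ (add_left_injective b3)
    have h3 := hsing A b1
    rw [hXdef, Finset.union_comm, ← h1, h2, h3]
    omega
  rcases le_or_gt B.card (C.card + 1) with hcase | hcase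
  · refine ⟨b1, hb1B, b1, hb1B, b3, hb3B, ?_⟩
    have hset : ({b1, b1, b3} : Finset L) = {b1} ∪ {b3} := by
      rw [Finset.insert_eq, Finset.insert_eq, ← Finset.union_assoc, Finset.union_self]
    rw [hset, Finset.add_union, ← hXdef, hX]
    push_cast; omega
  -- interesting case
  set I := (B.erase b1).erase b3 with hIdef
  have hb3e : b3 ∈ B.erase b1 := Finset.mem_erase.2 ⟨hb13.ne', hb3B⟩
  have hIcard : I.card + 2 = B.card := by
    rw [hIdef, Finset.card_erase_of_mem hb3e, Finset.card_erase_of_mem hb1B]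
    have : 1 ≤ B.card := Finset.card_pos.2 hB
    omega
  have hIint : ∀ t ∈ I, b1 < t ∧ t < b3 := by
    intro t ht
    rw [hIdef, Finset.mem_erase, Finset.mem_erase] at ht
    obtain ⟨ht3, ht1, htB⟩ := ht
    exact ⟨lt_of_le_of_ne (B.min'_le _ htB) (Ne.symm ht1),
      lt_of_le_of_ne (B.le_max' _ htB) ht3⟩
  have hIB : ∀ t ∈ I, t ∈ B := by
    intro t ht
    rw [hIdef, Finset.mem_erase, Finset.mem_erase] at ht
    exact ht.2.2
  have htne : ∀ t ∈ I, t ≠ b1 := by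
    intro t ht
    exact (Finset.mem_erase.1 (Finset.mem_erase.1 ht).2).1
  -- quotient map
  set π : L → L ⧸ AddSubgroup.zmultiples d := QuotientAddGroup.mk with hπdef
  have hπeq : ∀ x y : L, π x = π y → ∃ k : ℤ, y - x = k • d := by
    intro x y h
    rw [hπdef, QuotientAddGroup.eq, AddSubgroup.mem_zmultiples_iff] at h
    obtain ⟨k, hk⟩ := h
    exact ⟨k, by rw [hk]; abel⟩
  have hπinj : ∀ x y : L, π x = π y → -d < y - x → y - x < d → x = y := by
    intro x y h h1 h2
    obtain ⟨k, hk⟩ := hπeq x y h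
    rw [hk] at h1 h2
    have hk0 := blt_zsmul_zero hd h1 h2
    rw [hk0, zero_zsmul] at hk
    exact (sub_eq_zero.1 hk).symm
  have hπd : ∀ x : L, π (x + d) = π x := by
    intro x
    rw [hπdef, QuotientAddGroup.eq, AddSubgroup.mem_zmultiples_iff]
    exact ⟨-1, by rw [neg_zsmul, one_zsmul]; abel⟩
  -- bound on image of X under π
  have hXπ : (X.image π).card ≤ C.card := by
    have hsub : X.image π ⊆ C.image (fun y => π (y + b1)) := by
      intro q hq
      rw [Finset.mem_image] at hq
      obtain ⟨x, hx, rfl⟩ := hq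
      rw [hmemX] at hx
      have hex : ∃ a ∈ A, π x = π (a + b1) := by
        rcases hx with ⟨a, ha, rfl⟩ | ⟨a, ha, rfl⟩
        · exact ⟨a, ha, rfl⟩
        · refine ⟨a, ha, ?_⟩
          have h3 : a + b3 = a + b1 + d := by rw [hddef]; abel
          rw [h3, hπd]
      obtain ⟨a, ha, hπx⟩ := hex
      set T := A.filter (fun y => π (y + b1) = π (a + b1)) with hTdef
      have hTne : T.Nonempty := ⟨a, by rw [hTdef, Finset.mem_filter]; exact ⟨ha, rfl⟩⟩
      set y := T.max' hTne with hydef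
      have hyT : y ∈ T := T.max'_mem hTne
      rw [hTdef, Finset.mem_filter] at hyT
      have hyC : y ∈ C := by
        rw [hCdef, Finset.mem_filter]
        refine ⟨hyT.1, fun hmem => ?_⟩
        have hTmem : y + d ∈ T := by
          rw [hTdef, Finset.mem_filter]
          refine ⟨hmem, ?_⟩
          have h4 : y + d + b1 = y + b1 + d := by abel
          rw [h4, hπd, hyT.2]
        exact absurd (T.le_max' _ hTmem) (not_le.2 (lt_add_of_pos_right _ hd))
      rw [Finset.mem_image]
      exact ⟨y, hyC, by rw [hyT.2, hπx]⟩
    calc (X.image π).card ≤ (C.image (fun y => π (y + b1))).card := Finset.card_le_card hsub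
      _ ≤ C.card := Finset.card_image_le
  -- per-element bound
  have hbound : ∀ a ∈ A, (I.filter (fun t => a + t ∈ X)).card + 1 ≤ C.card := by
    intro a haA
    set S := I.filter (fun t => a + t ∈ X) with hSdef
    have hinj : Set.InjOn (fun t => π (a + t)) S := by
      intro t ht t' ht' h
      rw [hSdef, Finset.coe_filter, Set.mem_setOf_eq] at ht ht'
      obtain ⟨ht1, ht2⟩ := hIint t ht.1
      obtain ⟨ht1', ht2'⟩ := hIint t' ht'.1
      have hlt1 : -d < (a + t') - (a + t) := by
        rw [add_sub_add_left_eq_sub, hddef, neg_sub]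
        exact sub_lt_sub ht1' ht2
      have hlt2 : (a + t') - (a + t) < d := by
        rw [add_sub_add_left_eq_sub, hddef]
        exact sub_lt_sub ht2' ht1
      have := hπinj (a + t) (a + t') h hlt1 hlt2
      exact add_left_cancel this
    have himg : S.image (fun t => π (a + t)) ⊆ (X.image π).erase (π (a + b1)) := by
      intro q hq
      rw [Finset.mem_image] at hq
      obtain ⟨t, ht, rfl⟩ := hq
      rw [hSdef, Finset.mem_filter] at ht
      obtain ⟨htI, htX⟩ := ht
      obtain ⟨ht1, ht2⟩ := hIint t htI
      rw [Finset.mem_erase]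
      refine ⟨fun h => ?_, Finset.mem_image_of_mem _ htX⟩
      have hlt1 : -d < (a + t) - (a + b1) := by
        rw [add_sub_add_left_eq_sub, hddef, neg_sub]
        exact sub_lt_sub ht1 hb13
      have hlt2 : (a + t) - (a + b1) < d := by
        rw [add_sub_add_left_eq_sub, hddef]
        exact sub_lt_sub_right ht2 b1
      have heq := hπinj (a + b1) (a + t) h.symm hlt1 hlt2
      exact htne t htI (add_left_cancel heq).symm
    have hmem : π (a + b1) ∈ X.image π := by
      apply Finset.mem_image_of_mem
      rw [hmemX]
      exact Or.inl ⟨a, haA, rfl⟩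
    have h1 : S.card = (S.image (fun t => π (a + t))).card :=
      (Finset.card_image_of_injOn hinj).symm
    have h2 : (S.image (fun t => π (a + t))).card ≤ ((X.image π).erase (π (a + b1))).card :=
      Finset.card_le_card himg
    rw [Finset.card_erase_of_mem hmem] at h2
    have h3 : 1 ≤ (X.image π).card := Finset.card_pos.2 ⟨_, hmem⟩
    omega
  -- double counting
  have hswap : ∑ t ∈ I, ((A + ({t} : Finset L)) ∩ X).card
      = ∑ a ∈ A, (I.filter (fun t => a + t ∈ X)).card := by
    have hcoleq : ∀ t : L, (A + ({t} : Finset L)) ∩ X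
        = (A.filter (fun a => a + t ∈ X)).image (· + t) := by
      intro t
      ext x
      rw [Finset.mem_inter, hmemsing]
      simp only [Finset.mem_image, Finset.mem_filter]
      constructor
      · rintro ⟨⟨a, ha, rfl⟩, hx⟩
        exact ⟨a, ⟨ha, hx⟩, rfl⟩
      · rintro ⟨a, ⟨ha, hx⟩, rfl⟩
        exact ⟨⟨a, ha, rfl⟩, hx⟩
    calc ∑ t ∈ I, ((A + ({t} : Finset L)) ∩ X).card
        = ∑ t ∈ I, (A.filter (fun a => a + t ∈ X)).card := by
          refine Finset.sum_congr rfl fun t _ => ?_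
          rw [hcoleq t]
          exact Finset.card_image_of_injective _ (add_left_injective t)
      _ = ∑ t ∈ I, ∑ a ∈ A, if a + t ∈ X then 1 else 0 := by
          refine Finset.sum_congr rfl fun t _ => ?_
          rw [Finset.card_filter]
      _ = ∑ a ∈ A, ∑ t ∈ I, if a + t ∈ X then 1 else 0 := Finset.sum_comm
      _ = ∑ a ∈ A, (I.filter (fun t => a + t ∈ X)).card := by
          refine Finset.sum_congr rfl fun a _ => ?_
          rw [Finset.card_filter]
  -- pigeonhole
  have hpigeon : ∃ t ∈ I, ((A + ({t} : Finset L)) ∩ X).card + B.card ≤ A.card + C.card + 1 := by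
    by_contra hcon
    push_neg at hcon
    have hlow : I.card * (A.card + C.card + 2)
        ≤ ∑ t ∈ I, ((A + ({t} : Finset L)) ∩ X).card + I.card * B.card := by
      have h : ∑ t ∈ I, (A.card + C.card + 2)
          ≤ ∑ t ∈ I, (((A + ({t} : Finset L)) ∩ X).card + B.card) := by
        refine Finset.sum_le_sum fun t ht => ?_
        have := hcon t ht
        omega
      simp only [Finset.sum_const, smul_eq_mul, Finset.sum_add_distrib] at h ⊢
      omega
    have hup : ∑ t ∈ I, ((A + ({t} : Finset L)) ∩ X).card + A.card ≤ A.card * C.card := by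
      rw [hswap]
      have h : ∑ a ∈ A, ((I.filter (fun t => a + t ∈ X)).card + 1) ≤ ∑ a ∈ A, C.card :=
        Finset.sum_le_sum hbound
      simp only [Finset.sum_add_distrib, Finset.sum_const, smul_eq_mul, mul_one] at h
      omega
    have hic : C.card ≤ I.card := by omega
    have hip : I.card + 2 ≤ A.card := by omega
    have h1 : (I.card : ℤ) * (A.card + C.card + 2)
        ≤ ((∑ t ∈ I, ((A + ({t} : Finset L)) ∩ X).card : ℕ) : ℤ) + I.card * B.card := by
      exact_mod_cast hlow
    have h2 : ((∑ t ∈ I, ((A + ({t} : Finset L)) ∩ X).card : ℕ) : ℤ) + A.card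
        ≤ A.card * C.card := by exact_mod_cast hup
    have hn' : (B.card : ℤ) = I.card + 2 := by exact_mod_cast hIcard.symm
    have hic' : (C.card : ℤ) ≤ I.card := by exact_mod_cast hic
    have hip' : (I.card : ℤ) + 2 ≤ A.card := by exact_mod_cast hip
    nlinarith [mul_nonneg (sub_nonneg.2 hic')
      (sub_nonneg.2 (by linarith : (I.card : ℤ) ≤ A.card))]
  obtain ⟨t, htI, hcol⟩ := hpigeon
  refine ⟨b1, hb1B, t, hIB t htI, b3, hb3B, ?_⟩
  have hset : ({b1, t, b3} : Finset L) = {b1} ∪ ({t} ∪ {b3}) := by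
    rw [Finset.insert_eq, Finset.insert_eq]
  have hAeq : A + ({b1, t, b3} : Finset L) = (A + ({t} : Finset L)) ∪ X := by
    rw [hset, Finset.add_union, Finset.add_union, hXdef]
    rw [Finset.union_left_comm]
  have hcard := Finset.card_union_add_card_inter (A + ({t} : Finset L)) X
  rw [hsing, hX] at hcard
  rw [hAeq]
  omega

/-- An additive monoid is torsion-free if all non-zero elements have infinite order
(the definition `AddMonoid.IsTorsionFree` of the older Mathlib, since removed). -/
def AddMonoid.IsTorsionFree (G : Type*) [AddMonoid G] : Prop :=
  ∀ g : G, g ≠ 0 → ¬IsOfFinAddOrder g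

theorem stmt_8 {G : Type*} [AddCommGroup G] (A B : Finset G)
    (hA : A.Nonempty) (hB : B.Nonempty) (hAB : B.card ≤ A.card)
    (htf : AddMonoid.IsTorsionFree (AddSubgroup.closure ((A : Set G) ∪ (B : Set G)))) :
    ∃ b₁ ∈ B, ∃ b₂ ∈ B, ∃ b₃ ∈ B,
      (A.card : ℤ) + B.card - 1 ≤ ((A + ({b₁, b₂, b₃} : Finset G)).card : ℤ) := by
  classical
  set H := AddSubgroup.closure ((A : Set G) ∪ (B : Set G)) with hHdef
  have hAH : ∀ a ∈ A, a ∈ H := fun a ha => AddSubgroup.subset_closure (Or.inl ha)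
  have hBH : ∀ b ∈ B, b ∈ H := fun b hb => AddSubgroup.subset_closure (Or.inr hb)
  have hfg : AddGroup.FG H := by
    have heq : H = AddSubgroup.closure ((↑(A ∪ B) : Set G)) := by
      rw [hHdef, Finset.coe_union]
    rw [heq]
    exact AddGroup.closure_finset_fg _
  haveI : Module.Finite ℤ H := Module.Finite.iff_addGroup_fg.mpr hfg
  haveI : IsAddTorsionFree H := isAddTorsionFree_iff_not_isOfFinAddOrder.mpr (fun a ha => htf a ha)
  haveI : NoZeroSMulDivisors ℤ H := inferInstance
  haveI : Module.Free ℤ H := Module.free_of_finite_type_torsion_free'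
  set ι := Module.Free.ChooseBasisIndex ℤ H with hι
  set n := Fintype.card ι with hn
  haveI : IsOrderedAddMonoid (Lex (Fin n → ℤ)) := inferInstance
  obtain ⟨ψ⟩ : Nonempty (H ≃+ Lex (Fin n → ℤ)) :=
    ⟨(((Module.Free.chooseBasis ℤ H).repr.toAddEquiv.trans
      (Finsupp.domCongr (Fintype.equivFin ι))).trans
      Finsupp.addEquivFunOnFinite).trans
      { toEquiv := toLex, map_add' := fun _ _ => rfl }⟩
  -- finsets in H
  set AH : Finset H := A.subtype (· ∈ H) with hAHdef
  set BH : Finset H := B.subtype (· ∈ H) with hBHdef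
  set A' : Finset (Lex (Fin n → ℤ)) := AH.image ψ with hA'
  set B' : Finset (Lex (Fin n → ℤ)) := BH.image ψ with hB'
  have hAHmap : AH.map (Function.Embedding.subtype _) = A := Finset.subtype_map_of_mem hAH
  have hBHmap : BH.map (Function.Embedding.subtype _) = B := Finset.subtype_map_of_mem hBH
  have hAHcard : AH.card = A.card := by rw [← hAHmap, Finset.card_map]
  have hBHcard : BH.card = B.card := by rw [← hBHmap, Finset.card_map]
  have hA'card : A'.card = A.card := by
    rw [hA', Finset.card_image_of_injective _ ψ.injective, hAHcard]
  have hB'card : B'.card = B.card := by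
    rw [hB', Finset.card_image_of_injective _ ψ.injective, hBHcard]
  obtain ⟨c₁, hc₁, c₂, hc₂, c₃, hc₃, hineq⟩ :=
    blt_key A' B' (by rw [← Finset.card_pos, hA'card, Finset.card_pos]; exact hA)
      (by rw [← Finset.card_pos, hB'card, Finset.card_pos]; exact hB)
      (by rw [hA'card, hB'card]; exact hAB)
  rw [hB', Finset.mem_image] at hc₁ hc₂ hc₃
  obtain ⟨β₁, hβ₁, rfl⟩ := hc₁
  obtain ⟨β₂, hβ₂, rfl⟩ := hc₂
  obtain ⟨β₃, hβ₃, rfl⟩ := hc₃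
  rw [hBHdef, Finset.mem_subtype] at hβ₁ hβ₂ hβ₃
  refine ⟨β₁, hβ₁, β₂, hβ₂, β₃, hβ₃, ?_⟩
  set T : Finset H := {β₁, β₂, β₃} with hT
  have h1 : AH.image (⇑H.subtype) = A := by
    rw [AddSubgroup.coe_subtype, ← hAHmap, Finset.map_eq_image, Function.Embedding.coe_subtype]
  have h2 : T.image (⇑H.subtype) = ({(β₁ : G), (β₂ : G), (β₃ : G)} : Finset G) := by
    rw [hT]
    simp [Finset.image_insert, Finset.image_singleton]
  have h3 : (AH + T).image (⇑H.subtype) = A + ({(β₁ : G), (β₂ : G), (β₃ : G)} : Finset G) := by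
    rw [Finset.image_add, h1, h2]
  have h4 : (AH + T).image (⇑ψ) = A' + ({ψ β₁, ψ β₂, ψ β₃} : Finset (Lex (Fin n → ℤ))) := by
    rw [Finset.image_add, hA', hT]
    congr 1
    simp [Finset.image_insert, Finset.image_singleton]
  have hcardG : (A + ({(β₁ : G), (β₂ : G), (β₃ : G)} : Finset G)).card = (AH + T).card := by
    rw [← h3]
    exact Finset.card_image_of_injective _ Subtype.val_injective
  have hcardL : (A' + ({ψ β₁, ψ β₂, ψ β₃} : Finset (Lex (Fin n → ℤ)))).card = (AH + T).card := by
    rw [← h4]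
    exact Finset.card_image_of_injective _ ψ.injective
  have hfin : ((A + ({(β₁:G), (β₂:G), (β₃:G)} : Finset G)).card : ℤ)
      = ((A' + ({ψ β₁, ψ β₂, ψ β₃} : Finset (Lex (Fin n → ℤ)))).card : ℤ) := by
    rw [hcardG, hcardL]
  rw [hA'card, hB'card] at hineq
  rw [hfin]
  exact hineq
end

section
/- Let X ⊆ ℝ^{d-1} be a finite set with affine span of dimension d-1 and let x be an extreme point of X (i.e., a vertex of the convex hull of X), with X' = X \ {x}. If dim(X') = d-2, then the sets {2x}, X' + {x}, and X' + X' are pairwise disjoint. -/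
open Pointwise
open scoped Classical

theorem stmt_9 (d : ℕ) (hd : 2 ≤ d) (X : Finset (Fin (d - 1) → ℝ)) (x : Fin (d - 1) → ℝ)
    (hx : x ∈ X)
    (hdim : Module.finrank ℝ (affineSpan ℝ (X : Set (Fin (d - 1) → ℝ))).direction = d - 1)
    (hext : x ∉ convexHull ℝ ((X.erase x : Finset (Fin (d - 1) → ℝ)) : Set (Fin (d - 1) → ℝ)))
    (hdim' : Module.finrank ℝ (affineSpan ℝ
      ((X.erase x : Finset (Fin (d - 1) → ℝ)) : Set (Fin (d - 1) → ℝ))).direction = d - 2) :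
    Disjoint ({x + x} : Set (Fin (d - 1) → ℝ))
        (((X.erase x : Finset _) : Set (Fin (d - 1) → ℝ)) + {x}) ∧
    Disjoint ({x + x} : Set (Fin (d - 1) → ℝ))
        (((X.erase x : Finset _) : Set (Fin (d - 1) → ℝ)) +
          ((X.erase x : Finset _) : Set (Fin (d - 1) → ℝ))) ∧
    Disjoint (((X.erase x : Finset _) : Set (Fin (d - 1) → ℝ)) + {x})
        (((X.erase x : Finset _) : Set (Fin (d - 1) → ℝ)) +
          ((X.erase x : Finset _) : Set (Fin (d - 1) → ℝ))) := by
  refine ⟨?_, ?_, ?_⟩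
  · rw [Set.disjoint_left]
    rintro a ha ⟨u, hu, y, hy, rfl⟩
    simp only [Set.mem_singleton_iff] at ha hy
    rw [hy] at ha
    exact (Finset.ne_of_mem_erase hu) (add_right_cancel ha)
  · rw [Set.disjoint_left]
    rintro a ha ⟨u, hu, v, hv, rfl⟩
    simp only [Set.mem_singleton_iff] at ha
    apply hext
    have hxm : x = (1/2 : ℝ) • u + (1/2 : ℝ) • v := by
      have h2 : (1/2 : ℝ) • (u + v) = (1/2 : ℝ) • (x + x) := by rw [ha]
      rw [smul_add, smul_add] at h2
      have : (1/2 : ℝ) • x + (1/2 : ℝ) • x = x := by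
        rw [← add_smul]; norm_num
      rw [this] at h2
      exact h2.symm
    have hmem := (convex_convexHull ℝ ((X.erase x : Finset _) : Set (Fin (d - 1) → ℝ)))
      (subset_convexHull ℝ _ hu) (subset_convexHull ℝ _ hv)
      (by norm_num : (0:ℝ) ≤ 1/2) (by norm_num : (0:ℝ) ≤ 1/2)
      (by norm_num : (1/2:ℝ) + 1/2 = 1)
    rwa [← hxm] at hmem
  · rw [Set.disjoint_left]
    rintro a ⟨u, hu, y, hy, rfl⟩ ⟨v, hv, w, hw, heq⟩
    simp only [Set.mem_singleton_iff] at hy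
    rw [hy] at heq
    -- x = v + w - u ∈ affineSpan X'
    have hxspan : x ∈ affineSpan ℝ ((X.erase x : Finset _) : Set (Fin (d - 1) → ℝ)) := by
      have hv' := mem_affineSpan ℝ hv
      have hw' := mem_affineSpan ℝ hw
      have hu' := mem_affineSpan ℝ hu
      have := AffineSubspace.smul_vsub_vadd_mem _ (1 : ℝ) hv' hu' hw'
      have hxe : x = (1 : ℝ) • (v -ᵥ u) +ᵥ w := by
        have heq' : u + x = v + w := heq.symm
        simp only [one_smul, vsub_eq_sub, vadd_eq_add]
        rw [eq_sub_of_add_eq' heq']; abel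
      rwa [← hxe] at this
    have hsub : (X : Set (Fin (d - 1) → ℝ)) ⊆
        (affineSpan ℝ ((X.erase x : Finset _) : Set (Fin (d - 1) → ℝ)) : Set _) := by
      intro p hp
      by_cases hpx : p = x
      · subst hpx; exact hxspan
      · exact subset_affineSpan ℝ _ (by simpa [Finset.mem_erase, hpx] using hp)
    have hle : affineSpan ℝ (X : Set (Fin (d - 1) → ℝ)) ≤
        affineSpan ℝ ((X.erase x : Finset _) : Set (Fin (d - 1) → ℝ)) :=
      affineSpan_le.mpr hsub
    have hfr := Submodule.finrank_mono (AffineSubspace.direction_le hle)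
    rw [hdim, hdim'] at hfr
    omega
end

section
/- Let X ⊆ ℝ^{d-1} be a finite set with dim(X) = d-1 where d ≥ 2, let x ∈ X be an extreme point of X, and set X' = X \ {x}. If dim(X') = d-1, then there exist y_1, ..., y_{d-1} ∈ X' such that none of the points x, (x+y_1)/2, ..., (x+y_{d-1})/2 lies in the convex hull of X'. Consequently the sets x+x, x+y_1, ..., x+y_{d-1} and X'+X' give pairwise disjoint sumsets: {2x}, {x+y_1}, ..., {x+y_{d-1}}, X'+X' are pairwise disjoint. -/
open Pointwise Module
open scoped Classical


/-- Tilting step: if the argmax face of `f` lies in a hyperplane `{h = c}` also containing `x`,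
and some point of `X'` is on the positive side, we can tilt `f` so that the argmax grows. -/
lemma grow_aux {n : ℕ} (X' : Finset (Fin n → ℝ)) (x : Fin n → ℝ)
    (f h : (Fin n → ℝ) →ₗ[ℝ] ℝ) (M c : ℝ)
    (hM : ∀ z ∈ X', f z ≤ M) (hMx : M < f x)
    (hhx : h x = c) (hhF : ∀ z ∈ X', f z = M → h z = c)
    (hex : ∃ z ∈ X', c < h z) :
    ∃ g : (Fin n → ℝ) →ₗ[ℝ] ℝ, (∀ z ∈ X', g z < g x) ∧
      (∀ z ∈ X', f z = M → ∀ w ∈ X', g w ≤ g z) ∧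
      (∃ z ∈ X', f z ≠ M ∧ ∀ w ∈ X', g w ≤ g z) := by
  set G : Finset (Fin n → ℝ) := X'.filter (fun z => c < h z) with hGdef
  obtain ⟨z₁, hz₁X, hz₁⟩ := hex
  have hG : G.Nonempty := ⟨z₁, Finset.mem_filter.2 ⟨hz₁X, hz₁⟩⟩
  set t : ℝ := G.inf' hG (fun z => (M - f z) / (h z - c)) with htdef
  have hGne : ∀ z ∈ G, f z ≠ M := by
    intro z hz hzM
    have := hhF z (Finset.mem_filter.1 hz).1 hzM
    have := (Finset.mem_filter.1 hz).2
    linarith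
  have ht : 0 < t := by
    rw [htdef, Finset.lt_inf'_iff]
    intro z hz
    have hz' := Finset.mem_filter.1 hz
    have h1 : f z < M := lt_of_le_of_ne (hM z hz'.1) (hGne z hz)
    exact div_pos (by linarith) (by linarith [hz'.2])
  refine ⟨f + t • h, ?_, ?_, ?_⟩ <;> try skip
  all_goals
    have key1 : ∀ z ∈ X', (f + t • h) z ≤ M + t * c := by
      intro z hz
      simp only [LinearMap.add_apply, LinearMap.smul_apply, smul_eq_mul]
      rcases le_or_gt (h z) c with hc | hc
      · have := hM z hz
        nlinarith
      · have hzG : z ∈ G := Finset.mem_filter.2 ⟨hz, hc⟩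
        have h2 : t ≤ (M - f z) / (h z - c) := Finset.inf'_le _ hzG
        have h3 : t * (h z - c) ≤ M - f z := (le_div_iff₀ (by linarith)).1 h2
        nlinarith
  · -- separation
    intro z hz
    have h1 : f z + t * h z ≤ M + t * c := by simpa using key1 z hz
    simp only [LinearMap.add_apply, LinearMap.smul_apply, smul_eq_mul, hhx]
    linarith
  · -- old argmax still argmax
    intro z hz hzM w hw
    have h1 := key1 w hw
    have h2 : (f + t • h) z = M + t * c := by
      simp only [LinearMap.add_apply, LinearMap.smul_apply, smul_eq_mul, hzM, hhF z hz hzM]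
    linarith
  · -- a new element enters the argmax
    obtain ⟨z₀, hz₀G, hz₀⟩ := Finset.exists_mem_eq_inf' hG (fun z => (M - f z) / (h z - c))
    have hz₀' := Finset.mem_filter.1 hz₀G
    refine ⟨z₀, hz₀'.1, hGne z₀ hz₀G, ?_⟩
    intro w hw
    have h1 := key1 w hw
    have h2 : (f + t • h) z₀ = M + t * c := by
      simp only [LinearMap.add_apply, LinearMap.smul_apply, smul_eq_mul]
      have hne : h z₀ - c ≠ 0 := by have := hz₀'.2; intro hc; apply absurd hc; intro h; linarith
      have : t * (h z₀ - c) = M - f z₀ := by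
        rw [htdef, hz₀, div_mul_cancel₀ _ hne]
      nlinarith
    linarith

lemma grow {n : ℕ} (X' : Finset (Fin n → ℝ)) (hne : X'.Nonempty) (x : Fin n → ℝ)
    (hspan : vectorSpan ℝ (X' : Set (Fin n → ℝ)) = ⊤)
    (f : (Fin n → ℝ) →ₗ[ℝ] ℝ) (hsep : ∀ z ∈ X', f z < f x)
    (hlt : (X'.filter (fun z => ∀ w ∈ X', f w ≤ f z)).card < n) :
    ∃ g : (Fin n → ℝ) →ₗ[ℝ] ℝ, (∀ z ∈ X', g z < g x) ∧
      (X'.filter (fun z => ∀ w ∈ X', f w ≤ f z)).card <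
        (X'.filter (fun z => ∀ w ∈ X', g w ≤ g z)).card := by
  obtain ⟨a, haX, haM⟩ := Finset.exists_mem_eq_sup' hne f
  set M : ℝ := X'.sup' hne f with hMdef
  have hM : ∀ z ∈ X', f z ≤ M := fun z hz => Finset.le_sup' f hz
  have hMx : M < f x := haM ▸ hsep a haX
  set F : Finset (Fin n → ℝ) := X'.filter (fun z => ∀ w ∈ X', f w ≤ f z) with hFdef
  have hFiff : ∀ z, z ∈ F ↔ z ∈ X' ∧ f z = M := by
    intro z
    rw [hFdef, Finset.mem_filter]
    constructor
    · rintro ⟨h1, h2⟩; exact ⟨h1, le_antisymm (hM z h1) (haM ▸ h2 a haX)⟩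
    · rintro ⟨h1, h2⟩; exact ⟨h1, fun w hw => h2 ▸ hM w hw⟩
  have haF : a ∈ F := (hFiff a).2 ⟨haX, haM.symm⟩
  -- the span of the argmax face together with x - a is a proper subspace
  have hVcard : finrank ℝ (vectorSpan ℝ (F : Set (Fin n → ℝ))) + 1 ≤ F.card := by
    have hc : F.card = (F.card - 1) + 1 :=
      (Nat.succ_pred_eq_of_pos (Finset.card_pos.2 ⟨a, haF⟩)).symm
    have := finrank_vectorSpan_image_finset_le ℝ (id : (Fin n → ℝ) → (Fin n → ℝ)) F hc
    rw [Finset.image_id] at this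
    omega
  set W : Submodule ℝ (Fin n → ℝ) := vectorSpan ℝ (F : Set (Fin n → ℝ)) ⊔ (ℝ ∙ (x - a))
    with hWdef
  have hWrank : finrank ℝ W < n := by
    have h1 : finrank ℝ W ≤ finrank ℝ (vectorSpan ℝ (F : Set (Fin n → ℝ)))
        + finrank ℝ (ℝ ∙ (x - a)) :=
      Submodule.finrank_add_le_finrank_add_finrank _ _
    have h2 : finrank ℝ (ℝ ∙ (x - a)) ≤ 1 := by
      rcases eq_or_ne (x - a) 0 with h | h
      · rw [h, Submodule.span_zero_singleton, finrank_bot]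
        omega
      · rw [finrank_span_singleton h]
    omega
  have hWne : W ≠ ⊤ := by
    intro hW
    rw [hW] at hWrank
    rw [finrank_top, Module.finrank_fin_fun] at hWrank
    omega
  obtain ⟨h, hh0, hhmap⟩ :=
    Submodule.exists_dual_map_eq_bot_of_lt_top (lt_top_iff_ne_top.2 hWne) inferInstance
  have hker : ∀ w ∈ W, h w = 0 := by
    intro w hw
    have : h w ∈ W.map h := Submodule.mem_map_of_mem hw
    rw [hhmap] at this
    simpa using this
  have hhx : h x = h a := by
    have : x - a ∈ W := Submodule.mem_sup_right (Submodule.mem_span_singleton_self _)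
    have := hker _ this
    simp only [map_sub] at this
    linarith
  have hhF : ∀ z ∈ X', f z = M → h z = h a := by
    intro z hz hzM
    have hzF : z ∈ F := (hFiff z).2 ⟨hz, hzM⟩
    have : z - a ∈ W := Submodule.mem_sup_left
      (by simpa using vsub_mem_vectorSpan ℝ (Finset.mem_coe.2 hzF) (Finset.mem_coe.2 haF))
    have := hker _ this
    simp only [map_sub] at this
    linarith
  -- h is not constant on X'
  have hexne : ∃ z ∈ X', h z ≠ h a := by
    by_contra hcon
    push_neg at hcon
    apply hh0
    have hkerle : vectorSpan ℝ (X' : Set (Fin n → ℝ)) ≤ LinearMap.ker h := by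
      rw [vectorSpan_eq_span_vsub_set_right ℝ (Finset.mem_coe.2 haX)]
      rw [Submodule.span_le]
      rintro v ⟨z, hzX, rfl⟩
      simp only [SetLike.mem_coe, LinearMap.mem_ker, vsub_eq_sub, map_sub]
      rw [hcon z (Finset.mem_coe.1 hzX)]
      ring
    rw [hspan, top_le_iff] at hkerle
    exact LinearMap.ker_eq_top.1 hkerle
  obtain ⟨z₁, hz₁X, hz₁⟩ := hexne
  have main : ∃ g : (Fin n → ℝ) →ₗ[ℝ] ℝ, (∀ z ∈ X', g z < g x) ∧
      (∀ z ∈ X', f z = M → ∀ w ∈ X', g w ≤ g z) ∧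
      (∃ z ∈ X', f z ≠ M ∧ ∀ w ∈ X', g w ≤ g z) := by
    rcases hz₁.lt_or_gt with hlt' | hlt'
    · exact grow_aux X' x f (-h) M (-(h a)) hM hMx (by simp [hhx])
        (fun z hz hzM => by simp [hhF z hz hzM]) ⟨z₁, hz₁X, by simpa using hlt'⟩
    · exact grow_aux X' x f h M (h a) hM hMx hhx hhF ⟨z₁, hz₁X, hlt'⟩
  obtain ⟨g, hgsep, hgF, z₀, hz₀X, hz₀M, hz₀max⟩ := main
  refine ⟨g, hgsep, Finset.card_lt_card ?_⟩
  constructor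
  · intro z hz
    obtain ⟨hzX, hzM⟩ := (hFiff z).1 hz
    exact Finset.mem_filter.2 ⟨hzX, hgF z hzX hzM⟩
  · intro hsub
    have : z₀ ∈ F := hsub (Finset.mem_filter.2 ⟨hz₀X, hz₀max⟩)
    exact hz₀M ((hFiff z₀).1 this).2

lemma keylemma {n : ℕ} (hn : 0 < n) (X' : Finset (Fin n → ℝ)) (x : Fin n → ℝ)
    (hspan : vectorSpan ℝ (X' : Set (Fin n → ℝ)) = ⊤)
    (f₀ : (Fin n → ℝ) →ₗ[ℝ] ℝ) (hf₀ : ∀ z ∈ X', f₀ z < f₀ x) :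
    ∃ f : (Fin n → ℝ) →ₗ[ℝ] ℝ, (∀ z ∈ X', f z < f x) ∧
      n ≤ (X'.filter (fun z => ∀ w ∈ X', f w ≤ f z)).card := by
  have hne : X'.Nonempty := by
    rcases X'.eq_empty_or_nonempty with h | h
    · exfalso
      rw [h] at hspan
      simp only [Finset.coe_empty, vectorSpan_empty] at hspan
      have : finrank ℝ (⊥ : Submodule ℝ (Fin n → ℝ)) = finrank ℝ (Fin n → ℝ) := by
        rw [hspan]; exact finrank_top _ _
      rw [finrank_bot, Module.finrank_fin_fun] at this
      omega
    · exact h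
  set A : Set ℕ := {k | ∃ f : (Fin n → ℝ) →ₗ[ℝ] ℝ, (∀ z ∈ X', f z < f x) ∧
      (X'.filter (fun z => ∀ w ∈ X', f w ≤ f z)).card = k} with hAdef
  have hAne : A.Nonempty := ⟨_, f₀, hf₀, rfl⟩
  have hAbdd : BddAbove A := by
    refine ⟨X'.card, ?_⟩
    rintro k ⟨f, _, rfl⟩
    exact Finset.card_filter_le _ _
  obtain ⟨f, hfsep, hfcard⟩ := Nat.sSup_mem hAne hAbdd
  refine ⟨f, hfsep, ?_⟩
  by_contra hcon
  push_neg at hcon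
  rw [hfcard] at hcon
  obtain ⟨g, hgsep, hgcard⟩ := grow X' hne x hspan f hfsep (by rw [hfcard]; exact hcon)
  have : (X'.filter (fun z => ∀ w ∈ X', g w ≤ g z)).card ≤ sSup A :=
    le_csSup hAbdd ⟨g, hgsep, rfl⟩
  rw [hfcard] at hgcard
  omega

theorem stmt_10 (d : ℕ) (hd : 2 ≤ d) (X : Finset (Fin (d - 1) → ℝ)) (x : Fin (d - 1) → ℝ)
    (hx : x ∈ X)
    (hdim : Module.finrank ℝ (affineSpan ℝ (X : Set (Fin (d - 1) → ℝ))).direction = d - 1)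
    (hext : x ∉ convexHull ℝ ((X.erase x : Finset (Fin (d - 1) → ℝ)) : Set (Fin (d - 1) → ℝ)))
    (hdim' : Module.finrank ℝ (affineSpan ℝ
      ((X.erase x : Finset (Fin (d - 1) → ℝ)) : Set (Fin (d - 1) → ℝ))).direction = d - 1) :
    ∃ y : Fin (d - 1) → (Fin (d - 1) → ℝ), (∀ i, y i ∈ X.erase x) ∧
      x ∉ convexHull ℝ ((X.erase x : Finset _) : Set (Fin (d - 1) → ℝ)) ∧
      (∀ i, midpoint ℝ x (y i) ∉
        convexHull ℝ ((X.erase x : Finset _) : Set (Fin (d - 1) → ℝ))) ∧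
      Pairwise (Function.onFun Disjoint
        (Sum.elim (fun i : Fin (d - 1) => ({x + y i} : Set (Fin (d - 1) → ℝ)))
          (fun b : Bool =>
            if b then ({x + x} : Set (Fin (d - 1) → ℝ))
            else ((X.erase x : Finset _) : Set (Fin (d - 1) → ℝ)) +
              ((X.erase x : Finset _) : Set (Fin (d - 1) → ℝ))))) := by
  have hn : 0 < d - 1 := by omega
  set X' : Finset (Fin (d - 1) → ℝ) := X.erase x with hX'def
  -- the affine span of X' is everything
  have hspan : vectorSpan ℝ (X' : Set (Fin (d - 1) → ℝ)) = ⊤ := by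
    rw [← direction_affineSpan]
    apply Submodule.eq_top_of_finrank_eq
    rw [hdim', Module.finrank_fin_fun]
  -- separate x from the hull of X'
  obtain ⟨f₀, u, hf₀u, hu⟩ := geometric_hahn_banach_closed_point
    (convex_convexHull ℝ (X' : Set (Fin (d - 1) → ℝ))) (X'.finite_toSet.isClosed_convexHull (𝕜 := ℝ)) hext
  have hf₀ : ∀ z ∈ X', f₀.toLinearMap z < f₀.toLinearMap x := fun z hz =>
    lt_trans (hf₀u z (subset_convexHull ℝ _ (Finset.mem_coe.2 hz))) hu
  obtain ⟨f, hsep, hcard⟩ := keylemma hn X' x hspan f₀.toLinearMap hf₀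
  set F : Finset (Fin (d - 1) → ℝ) := X'.filter (fun z => ∀ w ∈ X', f w ≤ f z) with hFdef
  -- choose n distinct points in the argmax face
  set y : Fin (d - 1) → (Fin (d - 1) → ℝ) := fun i => (F.equivFin.symm (Fin.castLE hcard i) : Fin (d - 1) → ℝ)
    with hydef
  have hyF : ∀ i, y i ∈ F := fun i => (F.equivFin.symm (Fin.castLE hcard i)).2
  have hyX' : ∀ i, y i ∈ X' := fun i => (Finset.mem_filter.1 (hyF i)).1
  have hyinj : Function.Injective y := by
    intro i j hij
    have h1 : F.equivFin.symm (Fin.castLE hcard i) = F.equivFin.symm (Fin.castLE hcard j) :=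
      Subtype.coe_injective hij
    have h2 := F.equivFin.symm.injective h1
    exact Fin.castLE_injective hcard h2
  -- all chosen points have the same (maximal) value M
  have i₀ : Fin (d - 1) := ⟨0, hn⟩
  set M : ℝ := f (y i₀) with hMdef
  have hymax : ∀ i, ∀ w ∈ X', f w ≤ f (y i) := fun i => (Finset.mem_filter.1 (hyF i)).2
  have hyM : ∀ i, f (y i) = M :=
    fun i => le_antisymm (hymax i₀ _ (hyX' i)) (hymax i _ (hyX' i₀))
  have hMx : M < f x := hsep (y i₀) (hyX' i₀)
  have hMmax : ∀ w ∈ X', f w ≤ M := hymax i₀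
  -- f ≤ M on the convex hull of X'
  have hub : ∀ z ∈ convexHull ℝ (X' : Set (Fin (d - 1) → ℝ)), f z ≤ M := by
    intro z hz
    have : convexHull ℝ (X' : Set (Fin (d - 1) → ℝ)) ⊆ {w | f w ≤ M} := by
      apply convexHull_min
      · intro w hw
        exact hMmax w (Finset.mem_coe.1 hw)
      · exact (convex_Iic M).linear_preimage f
    exact this hz
  refine ⟨y, hyX', hext, ?_, ?_⟩
  · -- midpoints are outside the hull
    intro i hmem
    have h1 : f (midpoint ℝ x (y i)) ≤ M := hub _ hmem
    have h2 : f (midpoint ℝ x (y i)) = 2⁻¹ * (f x + f (y i)) := by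
      rw [midpoint_eq_smul_add, map_smul, map_add, smul_eq_mul, invOf_eq_inv]
    rw [h2, hyM i] at h1
    linarith
  · -- pairwise disjointness of the sumsets
    have hnotadd : ∀ v : Fin (d - 1) → ℝ, M ≤ f v →
        x + v ∉ (X' : Set (Fin (d - 1) → ℝ)) + (X' : Set (Fin (d - 1) → ℝ)) := by
      rintro v hv ⟨u, hu, w, hw, huw⟩
      have h1 : f u ≤ M := hMmax u (Finset.mem_coe.1 hu)
      have h2 : f w ≤ M := hMmax w (Finset.mem_coe.1 hw)
      have h3 : f u + f w = f x + f v := by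
        rw [← map_add, ← map_add]; exact congrArg f huw
      linarith
    have hxx : x + x ∉ (X' : Set (Fin (d - 1) → ℝ)) + (X' : Set (Fin (d - 1) → ℝ)) :=
      hnotadd x hMx.le
    have hxy : ∀ i, x + y i ∉ (X' : Set (Fin (d - 1) → ℝ)) + (X' : Set (Fin (d - 1) → ℝ)) :=
      fun i => hnotadd (y i) (hyM i).ge
    have hyx : ∀ i, y i ≠ x := by
      intro i hyx
      have h := hyM i
      rw [hyx] at h
      rw [← h] at hMx
      exact lt_irrefl _ hMx
    intro a b hab
    rcases a with i | b1 <;> rcases b with j | b2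
    · have hij : i ≠ j := by simpa using hab
      simp only [Function.onFun, Sum.elim_inl, Set.disjoint_singleton]
      intro hcon
      exact hij (hyinj (add_left_cancel hcon))
    · cases b2
      · simp only [Function.onFun, Sum.elim_inl, Sum.elim_inr, Bool.false_eq_true, if_false]
        exact Set.disjoint_singleton_left.2 (hxy i)
      · simp only [Function.onFun, Sum.elim_inl, Sum.elim_inr, if_true]
        rw [Set.disjoint_singleton]
        intro hcon
        exact hyx i (add_left_cancel hcon)
    · cases b1
      · simp only [Function.onFun, Sum.elim_inl, Sum.elim_inr, Bool.false_eq_true, if_false]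
        exact Set.disjoint_singleton_right.2 (hxy j)
      · simp only [Function.onFun, Sum.elim_inl, Sum.elim_inr, if_true]
        rw [Set.disjoint_singleton]
        intro hcon
        exact hyx j (add_left_cancel hcon.symm)
    · cases b1 <;> cases b2
      · simp at hab
      · simp only [Function.onFun, Sum.elim_inr, Bool.false_eq_true, if_false, if_true]
        exact Set.disjoint_singleton_right.2 hxx
      · simp only [Function.onFun, Sum.elim_inr, Bool.false_eq_true, if_false, if_true]
        exact Set.disjoint_singleton_left.2 hxx
      · simp at hab
end

section
/- Let A, B be finite non-empty subsets of an abelian group with |A + B| ≤ K|B|. Then for every k ∈ ℕ, the k-fold sumset kA = {a_1 + ... + a_k : a_1, ..., a_k ∈ A} satisfies |kA| ≤ K^k |B|. -/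
open Pointwise
open scoped Classical

lemma aux_set_eq {G : Type*} [AddCommGroup G] (A : Finset G) (k : ℕ) :
    {s : G | ∃ f : Fin k → G, (∀ i, f i ∈ A) ∧ s = ∑ i, f i} = ↑(k • A) := by
  induction k with
  | zero =>
    ext s
    simp [Finset.mem_zero]
  | succ n ih =>
    ext s
    simp only [succ_nsmul, Finset.coe_add, ← ih]
    constructor
    · rintro ⟨f, hf, rfl⟩
      rw [Fin.sum_univ_castSucc]
      exact Set.add_mem_add ⟨fun i => f i.castSucc, fun i => hf _, rfl⟩ (hf _)
    · rintro ⟨x, ⟨f, hf, rfl⟩, a, ha, rfl⟩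
      refine ⟨Fin.snoc f a, ?_, ?_⟩
      · intro i
        refine Fin.lastCases ?_ ?_ i
        · simpa using ha
        · intro j; simp [hf j]
      · rw [Fin.sum_univ_castSucc]
        simp

theorem stmt_12 {G : Type*} [AddCommGroup G] (A B : Finset G)
    (hA : A.Nonempty) (hB : B.Nonempty) (K : ℝ)
    (h : ((A + B).card : ℝ) ≤ K * B.card) (k : ℕ) :
    (({s : G | ∃ f : Fin k → G, (∀ i, f i ∈ A) ∧ s = ∑ i, f i}).ncard : ℝ)
      ≤ K ^ k * B.card := by
  rw [aux_set_eq, Set.ncard_coe_finset]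
  have key := Finset.pluennecke_ruzsa_inequality_nsmul_add hB A k
  have hBpos : (0 : ℝ) < B.card := by exact_mod_cast hB.card_pos
  -- convert ℚ≥0 inequality to ℝ
  have key' : ((k • A).card : ℝ) ≤ (((B + A).card : ℝ) / B.card) ^ k * B.card := by
    have := key
    push_cast [← NNRat.cast_le (K := ℝ)] at this
    convert this using 2
  refine key'.trans ?_
  have hK : ((B + A).card : ℝ) / B.card ≤ K := by
    rw [div_le_iff₀ hBpos, add_comm B A]
    exact h
  gcongr
end

section
/- Let A ⊆ ℝ^d be a finite set whose affine span has dimension d. Then |A + A| ≥ (d+1)|A| - d(d+1)/2. -/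
open Pointwise
open scoped Classical

open Finset Module Submodule

variable {V : Type*} [AddCommGroup V] [Module ℝ V] [FiniteDimensional ℝ V]

/-- Key cone lemma: if a finite set `S` admits a linear functional positive on it,
then `S` has at least `dim span S` elements not expressible as a sum of two elements of `S`. -/
lemma freiman_cone_lemma [DecidableEq V] (S : Finset V) (f : V →ₗ[ℝ] ℝ) (hf : ∀ s ∈ S, 0 < f s) :
    finrank ℝ (span ℝ (S : Set V)) ≤ (S \ (S + S)).card := by
  set C : Set V := {x | ∃ w : V → ℝ, (∀ t, 0 ≤ w t) ∧ x = ∑ t ∈ S, w t • t} with hC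
  set M : Finset V := S.filter (fun s => ¬ ∃ u ∈ S, u ≠ s ∧ s - u ∈ C) with hM
  have hMsub : M ⊆ S \ (S + S) := by
    intro s hs
    rw [Finset.mem_sdiff]
    rw [hM, Finset.mem_filter] at hs
    refine ⟨hs.1, fun hsum => ?_⟩
    obtain ⟨b, hb, c, hc, hbc⟩ := Finset.mem_add.mp hsum
    refine hs.2 ⟨b, hb, ?_, ?_⟩
    · intro hbs
      have hc0 : c = 0 := by
        have h' : b + c = b := by rw [hbc, hbs]
        simpa using h'
      exact absurd (hf c hc) (by rw [hc0]; simp)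
    · refine ⟨fun t => if t = c then 1 else 0, fun t => by positivity, ?_⟩
      have : ∑ t ∈ S, (if t = c then (1:ℝ) else 0) • t = c := by
        simp only [ite_smul, one_smul, zero_smul]
        rw [Finset.sum_ite_eq' S c (fun t => t)]
        simp [hc]
      rw [this, ← hbc]; abel
  have hspan : (S : Set V) ⊆ (span ℝ (M : Set V) : Set V) := by
    by_contra hcon
    rw [Set.not_subset] at hcon
    obtain ⟨s₀, hs₀S, hs₀⟩ := hcon
    obtain ⟨g₀, hg₀ne, hg₀bot⟩ := (span ℝ (M : Set V)).exists_dual_map_eq_bot_of_notMem hs₀ inferInstance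
    have hg₀M : ∀ m ∈ M, g₀ m = 0 := by
      intro m hm
      have : g₀ m ∈ (span ℝ (M : Set V)).map g₀ := ⟨m, subset_span hm, rfl⟩
      rw [hg₀bot] at this
      simpa using this
    -- wlog the functional is positive at s₀
    obtain ⟨g, hgpos, hgM⟩ : ∃ g : V →ₗ[ℝ] ℝ, 0 < g s₀ ∧ ∀ m ∈ M, g m = 0 := by
      rcases lt_or_gt_of_ne hg₀ne with h | h
      · exact ⟨-g₀, by simpa using h, fun m hm => by simp [hg₀M m hm]⟩
      · exact ⟨g₀, h, hg₀M⟩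
    have hSne : S.Nonempty := ⟨s₀, hs₀S⟩
    set ρ : ℝ := (S.image (fun s => g s / f s)).max' (hSne.image _) with hρdef
    have hρ : ∀ t ∈ S, g t ≤ ρ * f t := by
      intro t ht
      have h1 := Finset.le_max' (S.image (fun s => g s / f s)) (g t / f t)
        (Finset.mem_image_of_mem _ ht)
      rw [← hρdef, div_le_iff₀ (hf t ht)] at h1
      linarith [h1]
    have hρpos : 0 < ρ := by
      have h1 := Finset.le_max' (S.image (fun s => g s / f s)) (g s₀ / f s₀)
        (Finset.mem_image_of_mem _ hs₀S)
      rw [← hρdef] at h1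
      have h2 : 0 < g s₀ / f s₀ := div_pos hgpos (hf s₀ hs₀S)
      linarith
    set T : Finset V := S.filter (fun s => g s = ρ * f s) with hT
    have hTne : T.Nonempty := by
      obtain ⟨s₁, hs₁S, hs₁⟩ := Finset.mem_image.mp ((S.image (fun s => g s / f s)).max'_mem (hSne.image _))
      refine ⟨s₁, Finset.mem_filter.mpr ⟨hs₁S, ?_⟩⟩
      rw [← hρdef] at hs₁
      rw [div_eq_iff (ne_of_gt (hf s₁ hs₁S))] at hs₁
      exact hs₁
    obtain ⟨s', hs'T, hs'min⟩ := T.exists_min_image f hTne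
    rw [hT, Finset.mem_filter] at hs'T
    obtain ⟨hs'S, hgs'⟩ := hs'T
    have hs'notM : s' ∉ M := by
      intro hmem
      have := hgM s' hmem
      have := hf s' hs'S
      nlinarith
    have hex : ∃ u ∈ S, u ≠ s' ∧ s' - u ∈ C := by
      by_contra hcon2
      exact hs'notM (by rw [hM, Finset.mem_filter]; exact ⟨hs'S, hcon2⟩)
    obtain ⟨u, huS, hune, w, hw0, hweq⟩ := hex
    have h1 : g s' - g u = ∑ t ∈ S, w t * g t := by
      have := congrArg g hweq
      simpa [map_sub, map_sum, map_smul, smul_eq_mul] using this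
    have h2 : f s' - f u = ∑ t ∈ S, w t * f t := by
      have := congrArg f hweq
      simpa [map_sub, map_sum, map_smul, smul_eq_mul] using this
    have h3 : ∑ t ∈ S, w t * g t ≤ ρ * ∑ t ∈ S, w t * f t := by
      rw [Finset.mul_sum]
      refine Finset.sum_le_sum fun t ht => ?_
      have := hρ t ht
      have := hw0 t
      nlinarith
    have h4 : 0 < ∑ t ∈ S, w t * f t := by
      rcases (Finset.sum_nonneg fun t ht => mul_nonneg (hw0 t) (le_of_lt (hf t ht))).lt_or_eq with h | h
      · exact h
      · exfalso
        have hz : ∀ t ∈ S, w t * f t = 0 :=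
          (Finset.sum_eq_zero_iff_of_nonneg fun t ht => mul_nonneg (hw0 t) (le_of_lt (hf t ht))).mp h.symm
        have hwz : ∀ t ∈ S, w t • t = (0:V) := by
          intro t ht
          have : w t = 0 := by
            rcases mul_eq_zero.mp (hz t ht) with h' | h'
            · exact h'
            · exact absurd h' (ne_of_gt (hf t ht))
          simp [this]
        have : s' - u = 0 := by
          rw [hweq, Finset.sum_eq_zero hwz]
        exact hune (sub_eq_zero.mp this).symm
    have hfu : f u < f s' := by linarith
    have hgu : ρ * f u ≤ g u := by nlinarith
    have huT : u ∈ T := by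
      rw [hT, Finset.mem_filter]
      exact ⟨huS, le_antisymm (hρ u huS) hgu⟩
    linarith [hs'min u huT]
  calc finrank ℝ (span ℝ (S : Set V)) ≤ finrank ℝ (span ℝ (M : Set V)) := by
        apply Submodule.finrank_mono
        rw [span_le]
        exact hspan
    _ ≤ M.card := finrank_span_finset_le_card M
    _ ≤ (S \ (S + S)).card := Finset.card_le_card hMsub

lemma freiman_aux (d : ℕ) : ∀ (n : ℕ) (A : Finset (Fin d → ℝ)), A.card = n →
    2 * ((finrank ℝ (vectorSpan ℝ (A : Set (Fin d → ℝ))) + 1) * A.card) ≤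
      2 * (A + A).card +
        finrank ℝ (vectorSpan ℝ (A : Set (Fin d → ℝ))) *
          (finrank ℝ (vectorSpan ℝ (A : Set (Fin d → ℝ))) + 1) := by
  intro n
  induction n using Nat.strong_induction_on with
  | _ n ih =>
  intro A hn
  rcases A.eq_empty_or_nonempty with rfl | hA
  · simp [vectorSpan_empty]
  obtain ⟨v, hvA, hvmax⟩ := A.exists_max_image (fun a => ∑ i, a i * a i) hA
  obtain ⟨n', rfl⟩ : ∃ n', n = n' + 1 := ⟨n - 1, by
    have := Finset.card_pos.mpr hA
    omega⟩
  let f : (Fin d → ℝ) →ₗ[ℝ] ℝ :=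
    { toFun := fun x => ∑ i, x i * v i
      map_add' := fun x y => by
        simp only [Pi.add_apply, add_mul]
        exact Finset.sum_add_distrib
      map_smul' := fun c x => by
        simp only [Pi.smul_apply, smul_eq_mul, RingHom.id_apply, Finset.mul_sum, mul_assoc] }
  have hfdef : ∀ x, f x = ∑ i, x i * v i := fun x => rfl
  have hflt : ∀ a ∈ A, a ≠ v → f a < f v := by
    intro a ha hav
    have hne : ∃ i, v i - a i ≠ 0 := by
      by_contra h
      push_neg at h
      exact hav (funext fun i => by have := h i; linarith).symm
    obtain ⟨i₀, hi₀⟩ := hne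
    have hpos : 0 < ∑ i, (v i - a i) ^ 2 :=
      Finset.sum_pos' (fun i _ => sq_nonneg _) ⟨i₀, Finset.mem_univ _, by positivity⟩
    have hexp : ∑ i, (v i - a i) ^ 2
        = (∑ i, v i * v i) - 2 * (∑ i, a i * v i) + ∑ i, a i * a i := by
      calc ∑ i, (v i - a i) ^ 2
          = ∑ i, (v i * v i - 2 * (a i * v i) + a i * a i) :=
            Finset.sum_congr rfl (fun i _ => by ring)
        _ = (∑ i, v i * v i) - 2 * (∑ i, a i * v i) + ∑ i, a i * a i := by
            rw [Finset.sum_add_distrib, Finset.sum_sub_distrib, Finset.mul_sum]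
    have hQ : ∑ i, a i * a i ≤ ∑ i, v i * v i := hvmax a ha
    rw [hfdef a, hfdef v]
    linarith
  set A' := A.erase v with hA'
  set S := A'.image (fun a => a - v) with hS
  have hSmem : ∀ b ∈ A', b - v ∈ S := fun b hb => Finset.mem_image_of_mem _ hb
  have hfS : ∀ s ∈ S, 0 < (-f) s := by
    intro s hsS
    obtain ⟨a, haA', rfl⟩ := Finset.mem_image.mp hsS
    have ha : a ∈ A := Finset.mem_of_mem_erase haA'
    have hav : a ≠ v := Finset.ne_of_mem_erase haA'
    have h1 := hflt a ha hav
    simp only [LinearMap.neg_apply, map_sub]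
    linarith
  have hcoe : (S : Set (Fin d → ℝ)) = (· -ᵥ v) '' ((A : Set (Fin d → ℝ)) \ {v}) := by
    rw [hS, Finset.coe_image, hA', Finset.coe_erase]
    simp [vsub_eq_sub]
  have hspanS : span ℝ (S : Set (Fin d → ℝ)) = vectorSpan ℝ (A : Set (Fin d → ℝ)) := by
    rw [vectorSpan_eq_span_vsub_set_right_ne ℝ (show v ∈ (A : Set (Fin d → ℝ)) from hvA), ← hcoe]
  set k := finrank ℝ (vectorSpan ℝ (A : Set (Fin d → ℝ))) with hk
  have hkS : k ≤ (S \ (S + S)).card := by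
    have h1 := freiman_cone_lemma S (-f) hfS
    rwa [hspanS, ← hk] at h1
  have hA'A : A' + A' ⊆ A + A :=
    Finset.add_subset_add (Finset.erase_subset _ _) (Finset.erase_subset _ _)
  have hNsub : insert (v + v) ((S \ (S + S)).image (fun s => s + (v + v))) ⊆ A + A := by
    intro x hx
    rcases Finset.mem_insert.mp hx with rfl | hx
    · exact Finset.add_mem_add hvA hvA
    · obtain ⟨s, hs, rfl⟩ := Finset.mem_image.mp hx
      obtain ⟨a, haA', rfl⟩ := Finset.mem_image.mp (Finset.mem_sdiff.mp hs).1
      have he : a - v + (v + v) = a + v := by abel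
      rw [he]
      exact Finset.add_mem_add (Finset.mem_of_mem_erase haA') hvA
  have hvvnot : v + v ∉ (S \ (S + S)).image (fun s => s + (v + v)) := by
    intro h
    obtain ⟨s, hs, heq⟩ := Finset.mem_image.mp h
    have hs0 : s = 0 := by
      have h0 : s + (v + v) = 0 + (v + v) := by rw [heq, zero_add]
      exact add_right_cancel h0
    have h1 := hfS s (Finset.mem_sdiff.mp hs).1
    rw [hs0] at h1
    simp at h1
  have hNcard : (insert (v + v) ((S \ (S + S)).image (fun s => s + (v + v)))).card
      = (S \ (S + S)).card + 1 := by
    rw [Finset.card_insert_of_notMem hvvnot,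
      Finset.card_image_of_injective _ (add_left_injective _)]
  have hdisjN : Disjoint (insert (v + v) ((S \ (S + S)).image (fun s => s + (v + v)))) (A' + A') := by
    rw [Finset.disjoint_left]
    intro x hx hx'
    obtain ⟨b, hb, c, hc, hbc⟩ := Finset.mem_add.mp hx'
    rcases Finset.mem_insert.mp hx with rfl | hx2
    · have h1 := hfS _ (hSmem b hb)
      have h2 := hfS _ (hSmem c hc)
      have h0 : (b - v) + (c - v) = 0 := by
        have : b + c = v + v := hbc
        rw [sub_add_sub_comm, this]
        abel
      have h3 : (-f) ((b - v) + (c - v)) = 0 := by rw [h0]; simp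
      rw [map_add] at h3
      linarith
    · obtain ⟨s, hs, rfl⟩ := Finset.mem_image.mp hx2
      have hmem : s ∈ S + S := by
        have hseq : s = (b - v) + (c - v) := by
          have h5 : s = b + c - (v + v) := by rw [hbc]; abel
          rw [h5]; abel
        rw [hseq]
        exact Finset.add_mem_add (hSmem b hb) (hSmem c hc)
      exact (Finset.mem_sdiff.mp hs).2 hmem
  have hcard1 : (A' + A').card + ((S \ (S + S)).card + 1) ≤ (A + A).card := by
    have hu := Finset.card_union_of_disjoint hdisjN
    have hle := Finset.card_le_card (Finset.union_subset hNsub hA'A)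
    rw [hu, hNcard] at hle
    omega
  set m := finrank ℝ (vectorSpan ℝ (A' : Set (Fin d → ℝ))) with hm
  have hA'card : A'.card = n' := by
    rw [hA', Finset.card_erase_of_mem hvA, hn]
    omega
  have ihA' := ih n' (by omega) A' hA'card
  rw [hA'card, ← hm] at ihA'
  have hmk : m ≤ k := by
    rw [hm, hk]
    exact Submodule.finrank_mono (vectorSpan_mono ℝ
      (by rw [hA', Finset.coe_erase]; exact Set.diff_subset))
  by_cases hcase : m = k
  · rw [hcase] at ihA'
    rw [hn]
    calc 2 * ((k + 1) * (n' + 1)) = 2 * ((k + 1) * n') + 2 * (k + 1) := by ring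
      _ ≤ 2 * (A' + A').card + k * (k + 1) + 2 * (k + 1) := by linarith
      _ ≤ 2 * (A + A).card + k * (k + 1) := by linarith [hcard1, hkS]
  · have hmlt : m < k := lt_of_le_of_ne hmk hcase
    have hnotin : ∀ a ∈ A, v + a ∉ A' + A' := by
      intro a ha hmem
      obtain ⟨b, hb, c, hc, hbc⟩ := Finset.mem_add.mp hmem
      have hvb : v - b ∈ vectorSpan ℝ (A' : Set (Fin d → ℝ)) := by
        by_cases hav : a = v
        · rw [hav] at hbc
          have h2 : (2:ℝ) • (v - b) = c - b := by
            rw [two_smul, sub_add_sub_comm, sub_eq_sub_iff_add_eq_add, ← hbc]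
            abel
          have hcb : c - b ∈ vectorSpan ℝ (A' : Set (Fin d → ℝ)) := vsub_mem_vectorSpan ℝ hc hb
          have h4 := Submodule.smul_mem (vectorSpan ℝ (A' : Set (Fin d → ℝ))) ((1:ℝ)/2) hcb
          rw [← h2, smul_smul] at h4
          norm_num at h4
          exact h4
        · have haA' : a ∈ A' := Finset.mem_erase.mpr ⟨hav, ha⟩
          have h5 : v - b = c - a := by
            rw [sub_eq_sub_iff_add_eq_add, ← hbc]
            abel
          rw [h5]
          exact vsub_mem_vectorSpan ℝ hc haA'
      have hsub : (S : Set (Fin d → ℝ)) ⊆ (vectorSpan ℝ (A' : Set (Fin d → ℝ)) : Set (Fin d → ℝ)) := by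
        intro s hsS
        rw [hS, Finset.coe_image] at hsS
        obtain ⟨x, hx, rfl⟩ := hsS
        show x - v ∈ vectorSpan ℝ (A' : Set (Fin d → ℝ))
        have hxv : x - v = (x - b) - (v - b) := by abel
        rw [hxv]
        exact Submodule.sub_mem _ (vsub_mem_vectorSpan ℝ hx hb) hvb
      have h7 : k ≤ m := by
        rw [hk, hm, ← hspanS]
        exact Submodule.finrank_mono (span_le.mpr hsub)
      omega
    have hN2sub : A.image (fun a => v + a) ⊆ A + A := by
      intro x hx
      obtain ⟨a, ha, rfl⟩ := Finset.mem_image.mp hx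
      exact Finset.add_mem_add hvA ha
    have hN2card : (A.image (fun a => v + a)).card = n' + 1 := by
      rw [Finset.card_image_of_injective _ (add_right_injective v), hn]
    have hdisj2 : Disjoint (A.image (fun a => v + a)) (A' + A') := by
      rw [Finset.disjoint_left]
      intro x hx hx'
      obtain ⟨a, ha, rfl⟩ := Finset.mem_image.mp hx
      exact hnotin a ha hx'
    have hcard2 : (A' + A').card + (n' + 1) ≤ (A + A).card := by
      have hu := Finset.card_union_of_disjoint hdisj2
      have hle := Finset.card_le_card (Finset.union_subset hN2sub hA'A)
      rw [hu, hN2card] at hle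
      omega
    have hA'ne : A'.Nonempty := by
      rcases A'.eq_empty_or_nonempty with h | h
      · exfalso
        have hS0 : S = ∅ := by rw [hS, h]; simp
        have hk0 : k = 0 := by
          rw [hk, ← hspanS, hS0]
          simp
        omega
      · exact h
    obtain ⟨a₀, ha₀⟩ := hA'ne
    have hk1 : k ≤ m + 1 := by
      have hsple : vectorSpan ℝ (A : Set (Fin d → ℝ)) ≤
          vectorSpan ℝ (A' : Set (Fin d → ℝ)) ⊔ span ℝ {v - a₀} := by
        rw [vectorSpan_eq_span_vsub_set_right ℝ
          (show a₀ ∈ (A : Set (Fin d → ℝ)) from Finset.mem_of_mem_erase ha₀), span_le]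
        rintro x ⟨y, hy, rfl⟩
        by_cases hyv : y = v
        · subst hyv
          exact Submodule.mem_sup_right (subset_span
            (show y -ᵥ a₀ ∈ ({y - a₀} : Set (Fin d → ℝ)) from by
              rw [vsub_eq_sub]; exact rfl))
        · have hyA' : y ∈ A' := Finset.mem_erase.mpr ⟨hyv, hy⟩
          exact Submodule.mem_sup_left (vsub_mem_vectorSpan ℝ hyA' ha₀)
      have h1 := Submodule.finrank_mono hsple
      have h2 := Submodule.finrank_add_le_finrank_add_finrank
        (vectorSpan ℝ (A' : Set (Fin d → ℝ))) (span ℝ {v - a₀})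
      have h3 : finrank ℝ (span ℝ ({v - a₀} : Set (Fin d → ℝ))) ≤ 1 := by
        by_cases h0 : v - a₀ = 0
        · rw [h0, Submodule.span_zero_singleton]
          simp
        · rw [finrank_span_singleton h0]
      rw [hk, hm]
      linarith [h1, h2, h3]
    have hkm1 : k = m + 1 := by omega
    rw [hn, hkm1]
    have e2 : (m + 1) * (m + 1 + 1) = m * (m + 1) + 2 * m + 2 := by ring
    have e : 2 * ((m + 1 + 1) * (n' + 1)) = 2 * ((m + 1) * n') + 2 * n' + 2 * m + 4 := by ring
    rw [e]
    linarith [ihA', hcard2, e2]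

theorem stmt_13 (d : ℕ) (A : Finset (Fin d → ℝ))
    (hdim : Module.finrank ℝ (affineSpan ℝ (A : Set (Fin d → ℝ))).direction = d) :
    (d + 1 : ℤ) * A.card - d * (d + 1) / 2 ≤ ((A + A).card : ℤ) := by
  have key := freiman_aux d A.card A rfl
  rw [direction_affineSpan] at hdim
  rw [hdim] at key
  obtain ⟨t, ht⟩ := Nat.even_mul_succ_self d
  rw [ht] at key
  have hdiv : ((d:ℤ) * ((d:ℤ) + 1)) / 2 = (t:ℤ) := by
    have h2 : ((d:ℤ) * ((d:ℤ) + 1)) = 2 * t := by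
      have := congrArg (Nat.cast : ℕ → ℤ) ht
      push_cast at this
      linarith
    rw [h2]
    exact Int.mul_ediv_cancel_left _ two_ne_zero
  have keyZ : 2 * (((d:ℤ) + 1) * (A.card : ℤ)) ≤ 2 * ((A + A).card : ℤ) + ((t:ℤ) + t) := by
    exact_mod_cast key
  rw [hdiv]
  linarith
end

section
/- Let A, B ⊆ ℝ^d be finite non-empty sets with dim(A) = d and |A| ≥ |B|. Then |A + B| ≥ |A| + d|B| - d(d+1)/2. -/
open Pointwise
open scoped Classical

set_option linter.unusedSectionVars false
set_option linter.unusedVariables false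
set_option maxHeartbeats 1000000

namespace Ruzsa14

variable {V : Type*} [NormedAddCommGroup V] [NormedSpace ℝ V] [DecidableEq V]

noncomputable abbrev adim (X : Finset V) : ℕ :=
  Module.finrank ℝ (vectorSpan ℝ (X : Set V))

lemma exists_sep (S : Finset V) : (0:V) ∉ S → ∃ ψ : V →L[ℝ] ℝ, ∀ x ∈ S, ψ x ≠ 0 := by
  classical
  induction S using Finset.induction_on with
  | empty => exact fun _ => ⟨0, by simp⟩
  | @insert x S hxS ih =>
    intro h0
    have hx0 : x ≠ 0 := by rintro rfl; exact h0 (Finset.mem_insert_self _ _)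
    obtain ⟨ψ, hψ⟩ := ih (fun h => h0 (Finset.mem_insert_of_mem h))
    obtain ⟨φ, -, hφx⟩ := exists_dual_vector ℝ x (norm_ne_zero_iff.2 hx0)
    have hφx0 : φ x ≠ 0 := by
      rw [hφx]
      exact_mod_cast norm_ne_zero_iff.2 hx0
    set bad : Finset ℝ := (insert x S).image (fun s => -ψ s / φ s) with hbad
    obtain ⟨c, hc⟩ := Finset.exists_notMem bad
    refine ⟨ψ + c • φ, ?_⟩
    intro s hs
    have hgen : ∀ s ∈ insert x S, φ s ≠ 0 → (ψ + c • φ) s ≠ 0 := by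
      intro s hs hφs h
      apply hc
      rw [hbad]
      refine Finset.mem_image.2 ⟨s, hs, ?_⟩
      simp only [ContinuousLinearMap.add_apply, ContinuousLinearMap.coe_smul',
        Pi.smul_apply, smul_eq_mul] at h
      field_simp
      linarith
    rcases Finset.mem_insert.1 hs with rfl | hsS
    · exact hgen s hs hφx0
    · by_cases hφs : φ s = 0
      · simp only [ContinuousLinearMap.add_apply, ContinuousLinearMap.coe_smul',
          Pi.smul_apply, smul_eq_mul, hφs, mul_zero, add_zero]
        exact hψ s hsS
      · exact hgen s hs hφs

lemma exists_inj_functional (A B : Finset V) :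
    ∃ ψ : V →L[ℝ] ℝ, (∀ a ∈ A, ∀ a' ∈ A, ψ a = ψ a' → a = a') ∧
      (∀ b ∈ B, ∀ b' ∈ B, ψ b = ψ b' → b = b') := by
  classical
  obtain ⟨ψ, hψ⟩ := exists_sep (((A - A) ∪ (B - B)).filter (· ≠ 0)) (by simp)
  refine ⟨ψ, ?_, ?_⟩
  · intro a ha a' ha' h
    by_contra hne
    refine hψ (a - a') ?_ (by rw [map_sub, h, sub_self])
    exact Finset.mem_filter.2 ⟨Finset.mem_union_left _ (Finset.sub_mem_sub ha ha'),
      sub_ne_zero.2 hne⟩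
  · intro b hb b' hb' h
    by_contra hne
    refine hψ (b - b') ?_ (by rw [map_sub, h, sub_self])
    exact Finset.mem_filter.2 ⟨Finset.mem_union_right _ (Finset.sub_mem_sub hb hb'),
      sub_ne_zero.2 hne⟩


variable [FiniteDimensional ℝ V]

lemma adim_mono {X Y : Finset V} (h : X ⊆ Y) : adim X ≤ adim Y :=
  Submodule.finrank_mono (vectorSpan_mono ℝ (Finset.coe_subset.2 h))

lemma card_le_card_add (A B : Finset V) (hB : B.Nonempty) : A.card ≤ (A + B).card := by
  obtain ⟨b, hb⟩ := hB
  have h1 : A + {b} ⊆ A + B := Finset.add_subset_add_left (Finset.singleton_subset_iff.2 hb)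
  have h2 : (A + {b}).card = A.card := Finset.card_add_singleton A b
  rw [← h2]
  exact Finset.card_le_card h1

/-- The direction of `A` is contained in that of `A + B`. -/
lemma vectorSpan_le_add (A B : Finset V) (hA : A.Nonempty) (hB : B.Nonempty) :
    vectorSpan ℝ (A : Set V) ≤ vectorSpan ℝ ((A + B : Finset V) : Set V) := by
  obtain ⟨a₀, ha₀⟩ := hA
  obtain ⟨b₀, hb₀⟩ := hB
  rw [vectorSpan_eq_span_vsub_set_right ℝ (Finset.mem_coe.2 ha₀)]
  rw [Submodule.span_le]
  rintro x ⟨a, ha, rfl⟩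
  have h1 : (a + b₀ : V) ∈ ((A + B : Finset V) : Set V) :=
    Finset.mem_coe.2 (Finset.add_mem_add (Finset.mem_coe.1 ha) hb₀)
  have h2 : (a₀ + b₀ : V) ∈ ((A + B : Finset V) : Set V) :=
    Finset.mem_coe.2 (Finset.add_mem_add ha₀ hb₀)
  have := vsub_mem_vectorSpan ℝ h1 h2
  simpa [vsub_eq_sub] using this

/-- Removing one point from the left factor decreases the dimension by at most 1. -/
lemma adim_le_erase_add {A : Finset V} (B : Finset V) {a₀ : V} (ha₀ : a₀ ∈ A)
    (hA' : (A.erase a₀).Nonempty) (hB : B.Nonempty) :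
    adim (A + B) ≤ adim (A.erase a₀ + B) + 1 := by
  obtain ⟨a₁, ha₁⟩ := hA'
  obtain ⟨bb, hbb⟩ := hB
  set x : V := a₀ + bb with hx
  have hsub : ((A + B : Finset V) : Set V) ⊆
      ↑(affineSpan ℝ (insert x ((A.erase a₀ + B : Finset V) : Set V))) := by
    rintro y hy
    obtain ⟨a, ha, b, hb, rfl⟩ := Finset.mem_add.1 (Finset.mem_coe.1 hy)
    by_cases hne : a = a₀
    · rw [hne]
      have hdir : (b - bb : V) ∈ (affineSpan ℝ
          (insert x ((A.erase a₀ + B : Finset V) : Set V))).direction := by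
        rw [direction_affineSpan]
        have h1 : (a₁ + b : V) ∈ insert x ((A.erase a₀ + B : Finset V) : Set V) :=
          Set.mem_insert_of_mem _ (Finset.mem_coe.2 (Finset.add_mem_add ha₁ hb))
        have h2 : (a₁ + bb : V) ∈ insert x ((A.erase a₀ + B : Finset V) : Set V) :=
          Set.mem_insert_of_mem _ (Finset.mem_coe.2 (Finset.add_mem_add ha₁ hbb))
        have := vsub_mem_vectorSpan ℝ h1 h2
        simpa [vsub_eq_sub] using this
      have hxmem : x ∈ affineSpan ℝ (insert x ((A.erase a₀ + B : Finset V) : Set V)) :=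
        mem_affineSpan ℝ (Set.mem_insert _ _)
      have := AffineSubspace.vadd_mem_of_mem_direction hdir hxmem
      have heq : (b - bb) +ᵥ x = a₀ + b := by
        simp only [vadd_eq_add, hx]
        abel
      rwa [heq] at this
    · exact mem_affineSpan ℝ (Set.mem_insert_of_mem _
        (Finset.mem_coe.2 (Finset.add_mem_add (Finset.mem_erase.2 ⟨hne, ha⟩) hb)))
  have h1 : vectorSpan ℝ ((A + B : Finset V) : Set V) ≤
      vectorSpan ℝ (insert x ((A.erase a₀ + B : Finset V) : Set V)) := by
    have := affineSpan_le.2 hsub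
    have := AffineSubspace.direction_le this
    rwa [direction_affineSpan, direction_affineSpan] at this
  calc adim (A + B) ≤ Module.finrank ℝ
        (vectorSpan ℝ (insert x ((A.erase a₀ + B : Finset V) : Set V))) :=
        Submodule.finrank_mono h1
    _ ≤ adim (A.erase a₀ + B) + 1 := finrank_vectorSpan_insert_le_set ℝ _ _

/-- If removing `a₀` from `A` strictly decreases the dimension of the sumset, then
`a₀ + B` is disjoint from `A.erase a₀ + B`. -/
lemma not_mem_of_dim_lt {A B : Finset V} {a₀ : V} (ha₀ : a₀ ∈ A)
    (hA' : (A.erase a₀).Nonempty)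
    (hdlt : adim (A.erase a₀ + B) < adim (A + B)) :
    ∀ b ∈ B, a₀ + b ∉ A.erase a₀ + B := by
  intro b hb hmem
  obtain ⟨a₁, ha₁⟩ := hA'
  set Q := affineSpan ℝ ((A.erase a₀ + B : Finset V) : Set V) with hQ
  have hsub : ((A + B : Finset V) : Set V) ⊆ ↑Q := by
    rintro y hy
    obtain ⟨a, ha, b', hb', rfl⟩ := Finset.mem_add.1 (Finset.mem_coe.1 hy)
    by_cases hne : a = a₀
    · rw [hne]
      have hdir : (b' - b : V) ∈ Q.direction := by
        rw [hQ, direction_affineSpan]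
        have h1 : (a₁ + b' : V) ∈ ((A.erase a₀ + B : Finset V) : Set V) :=
          Finset.mem_coe.2 (Finset.add_mem_add ha₁ hb')
        have h2 : (a₁ + b : V) ∈ ((A.erase a₀ + B : Finset V) : Set V) :=
          Finset.mem_coe.2 (Finset.add_mem_add ha₁ hb)
        have := vsub_mem_vectorSpan ℝ h1 h2
        simpa [vsub_eq_sub] using this
      have hbase : (a₀ + b : V) ∈ Q := mem_affineSpan ℝ (Finset.mem_coe.2 hmem)
      have := AffineSubspace.vadd_mem_of_mem_direction hdir hbase
      have heq : (b' - b) +ᵥ (a₀ + b) = a₀ + b' := by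
        simp only [vadd_eq_add]
        abel
      rwa [heq] at this
    · exact mem_affineSpan ℝ (Finset.mem_coe.2
        (Finset.add_mem_add (Finset.mem_erase.2 ⟨hne, ha⟩) hb'))
  have h1 : vectorSpan ℝ ((A + B : Finset V) : Set V) ≤
      vectorSpan ℝ ((A.erase a₀ + B : Finset V) : Set V) := by
    have := affineSpan_le.2 hsub
    have := AffineSubspace.direction_le this
    rwa [direction_affineSpan, direction_affineSpan] at this
  have h2 : adim (A + B) ≤ adim (A.erase a₀ + B) := Submodule.finrank_mono h1
  omega

/-- A finite set has at least `finrank of its vectorSpan + 1` elements. -/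
lemma card_ge_finrank_succ {E : Finset V} (hE : E.Nonempty) :
    Module.finrank ℝ (vectorSpan ℝ (E : Set V)) + 1 ≤ E.card := by
  obtain ⟨p, hp⟩ := hE
  have himg : ((fun x => x -ᵥ p) '' ((E : Set V) \ {p})) =
      (((E.erase p).image (fun x => x - p) : Finset V) : Set V) := by
    ext y
    simp only [Set.mem_image, Set.mem_diff, Set.mem_singleton_iff, Finset.coe_image,
      Finset.mem_coe, Finset.mem_erase, Finset.mem_image, vsub_eq_sub]
    constructor
    · rintro ⟨x, ⟨hx1, hx2⟩, rfl⟩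
      exact ⟨x, ⟨hx2, hx1⟩, rfl⟩
    · rintro ⟨x, ⟨hx2, hx1⟩, rfl⟩
      exact ⟨x, ⟨hx1, hx2⟩, rfl⟩
  rw [vectorSpan_eq_span_vsub_set_right_ne ℝ (Finset.mem_coe.2 hp), himg]
  have h1 : Module.finrank ℝ (Submodule.span ℝ
      ((((E.erase p).image (fun x => x - p)) : Finset V) : Set V)) ≤
      ((E.erase p).image (fun x => x - p)).card := by
    simpa [Set.finrank] using finrank_span_finset_le_card (R := ℝ)
      ((E.erase p).image (fun x => x - p))
  have h2 : ((E.erase p).image (fun x => x - p)).card ≤ (E.erase p).card :=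
    Finset.card_image_le
  have h3 : (E.erase p).card = E.card - 1 := Finset.card_erase_of_mem hp
  have h4 : 1 ≤ E.card := Finset.card_pos.2 ⟨p, hp⟩
  omega


/-- Key geometric lemma: if `v` is an exposed vertex of the finite set `U`, there are at
least `adim U` points `z` of `U` (other than `v`) such that `z - v` is not the sum of two
differences `u₁ - v`, `u₂ - v` with `u₁, u₂ ∈ U \ {v}`. -/
lemma key (U : Finset V) {v : V} (hv : v ∈ U) (ψ : V →L[ℝ] ℝ)
    (hψ : ∀ u ∈ U, u ≠ v → ψ u < ψ v) :
    ∃ Z : Finset V, Z ⊆ U.erase v ∧ adim U ≤ Z.card ∧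
      ∀ z ∈ Z, ∀ u₁ ∈ U, ∀ u₂ ∈ U, u₁ ≠ v → u₂ ≠ v →
        (u₁ - v) + (u₂ - v) = z - v → False := by
  classical
  rcases (U.erase v).eq_empty_or_nonempty with hGe | hGne
  · refine ⟨∅, by simp, ?_, by simp⟩
    have hU : (U : Set V) ⊆ {v} := by
      intro u hu
      by_contra h
      have huG : u ∈ U.erase v :=
        Finset.mem_erase.2 ⟨by simpa using h, Finset.mem_coe.1 hu⟩
      simp [hGe] at huG
    have h1 : vectorSpan ℝ (U : Set V) ≤ vectorSpan ℝ ({v} : Set V) := vectorSpan_mono ℝ hU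
    rw [vectorSpan_singleton, le_bot_iff] at h1
    simp [adim, h1]
  · set G := U.erase v with hGdef
    have hcpos : ∀ u ∈ G, 0 < ψ v - ψ u := fun u hu =>
      sub_pos.2 (hψ u (Finset.mem_of_mem_erase hu) (Finset.ne_of_mem_erase hu))
    set g : V → V := fun u => (ψ v - ψ u)⁻¹ • (u - v) with hgdef
    set GG := G.image g with hGG
    have hGGne : GG.Nonempty := hGne.image g
    have hray : ∀ u ∈ G, u - v = (ψ v - ψ u) • g u := by
      intro u hu
      rw [hgdef]
      simp only [smul_smul, mul_inv_cancel₀ (hcpos u hu).ne', one_smul]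
    have hψg : ∀ u ∈ G, ψ (g u) = -1 := by
      intro u hu
      have h0 := (hcpos u hu).ne'
      rw [hgdef]
      simp only [map_smul, map_sub, smul_eq_mul]
      field_simp
      ring
    set C := convexHull ℝ (GG : Set V) with hC
    have hCcomp : IsCompact C := GG.finite_toSet.isCompact_convexHull ℝ
    have hCconv : Convex ℝ C := convex_convexHull ℝ _
    set E := C.extremePoints ℝ with hE
    have hEGG : E ⊆ ↑GG := extremePoints_convexHull_subset
    have hEfin : E.Finite := GG.finite_toSet.subset hEGG
    have hKM : closure (convexHull ℝ E) = C := closure_convexHull_extremePoints hCcomp hCconv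
    have hhullE : convexHull ℝ E = C := by
      rw [← hKM, (hEfin.isClosed_convexHull ℝ).closure_eq]
    have hspan : affineSpan ℝ E = affineSpan ℝ (GG : Set V) := by
      have e1 : affineSpan ℝ (convexHull ℝ E) = affineSpan ℝ E := affineSpan_convexHull E
      have e2 : affineSpan ℝ (convexHull ℝ (GG : Set V)) = affineSpan ℝ (GG : Set V) :=
        affineSpan_convexHull _
      rw [← e1, hhullE, hC, e2]
    have hvs : vectorSpan ℝ E = vectorSpan ℝ (GG : Set V) := by
      rw [← direction_affineSpan, ← direction_affineSpan, hspan]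
    obtain ⟨p₀, hp₀⟩ := hGGne
    have hD1 : vectorSpan ℝ (U : Set V) ≤ Submodule.span ℝ (GG : Set V) := by
      rw [vectorSpan_eq_span_vsub_set_right ℝ (Finset.mem_coe.2 hv), Submodule.span_le]
      rintro x ⟨u, hu, rfl⟩
      simp only [SetLike.mem_coe, vsub_eq_sub]
      by_cases hne : u = v
      · simp [hne]
      · have huG : u ∈ G := Finset.mem_erase.2 ⟨hne, Finset.mem_coe.1 hu⟩
        rw [hray u huG]
        exact Submodule.smul_mem _ _ (Submodule.subset_span
          (Finset.mem_coe.2 (Finset.mem_image_of_mem g huG)))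
    have hD2 : Submodule.span ℝ (GG : Set V) ≤
        vectorSpan ℝ (GG : Set V) ⊔ Submodule.span ℝ ({p₀} : Set V) := by
      rw [Submodule.span_le]
      intro x hx
      have h1 : x - p₀ ∈ vectorSpan ℝ (GG : Set V) := by
        have := vsub_mem_vectorSpan ℝ hx (Finset.mem_coe.2 hp₀)
        simpa [vsub_eq_sub] using this
      have h2 : p₀ ∈ Submodule.span ℝ ({p₀} : Set V) := Submodule.mem_span_singleton_self _
      have h3 := Submodule.add_mem_sup h1 h2
      simpa using h3
    have hfr : adim U ≤ Module.finrank ℝ (vectorSpan ℝ (GG : Set V)) + 1 := by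
      have t1 : adim U ≤ Module.finrank ℝ (Submodule.span ℝ (GG : Set V)) :=
        Submodule.finrank_mono hD1
      have t2 : Module.finrank ℝ (Submodule.span ℝ (GG : Set V)) ≤
          Module.finrank ℝ ↥(vectorSpan ℝ (GG : Set V) ⊔ Submodule.span ℝ ({p₀} : Set V)) :=
        Submodule.finrank_mono hD2
      have t3 := Submodule.finrank_add_le_finrank_add_finrank
        (vectorSpan ℝ (GG : Set V)) (Submodule.span ℝ ({p₀} : Set V))
      have t4 : Module.finrank ℝ (Submodule.span ℝ ({p₀} : Set V)) ≤ 1 := by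
        by_cases h : p₀ = (0 : V)
        · rw [h, Submodule.span_zero_singleton]
          simp
        · rw [finrank_span_singleton h]
      omega
    have hEne : E.Nonempty := by
      by_contra h
      rw [Set.not_nonempty_iff_eq_empty] at h
      have hCe : C = (∅ : Set V) := by rw [← hhullE, h, convexHull_empty]
      have : p₀ ∈ C := subset_convexHull ℝ (GG : Set V) (Finset.mem_coe.2 hp₀)
      rw [hCe] at this
      exact this
    set Efin := hEfin.toFinset with hEfindef
    have hEfinGG : Efin ⊆ GG := fun p hp => Finset.mem_coe.1 (hEGG (hEfin.mem_toFinset.1 hp))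
    have hEmem : ∀ p, p ∈ Efin ↔ p ∈ E := fun p => hEfin.mem_toFinset
    have hEfinne : Efin.Nonempty := by
      obtain ⟨x, hx⟩ := hEne
      exact ⟨x, (hEmem x).2 hx⟩
    have hEcard : adim U ≤ Efin.card := by
      have h1 := card_ge_finrank_succ hEfinne
      have h2 : vectorSpan ℝ ((Efin : Finset V) : Set V) = vectorSpan ℝ (GG : Set V) := by
        rw [hEfindef, hEfin.coe_toFinset, hvs]
      rw [h2] at h1
      omega
    have hTne : ∀ p ∈ Efin, (G.filter (fun u => g u = p)).Nonempty := by
      intro p hp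
      obtain ⟨u, hu, hgu⟩ := Finset.mem_image.1 (hEfinGG hp)
      exact ⟨u, Finset.mem_filter.2 ⟨hu, hgu⟩⟩
    have hzex : ∀ p ∈ Efin, ∃ z ∈ G.filter (fun u => g u = p),
        ∀ u ∈ G.filter (fun u => g u = p), ψ u ≤ ψ z :=
      fun p hp => Finset.exists_max_image _ ψ (hTne p hp)
    choose! zf hzf1 hzf2 using hzex
    have hzfG : ∀ p ∈ Efin, zf p ∈ G := fun p hp => Finset.mem_of_mem_filter _ (hzf1 p hp)
    have hzfg : ∀ p ∈ Efin, g (zf p) = p := fun p hp => (Finset.mem_filter.1 (hzf1 p hp)).2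
    refine ⟨Efin.image zf, ?_, ?_, ?_⟩
    · intro z hz
      obtain ⟨p, hp, rfl⟩ := Finset.mem_image.1 hz
      exact hzfG p hp
    · rw [Finset.card_image_of_injOn]
      · exact hEcard
      · intro p hp q hq hpq
        rw [← hzfg p (Finset.mem_coe.1 hp), ← hzfg q (Finset.mem_coe.1 hq), hpq]
    · rintro z hz u₁ hu₁ u₂ hu₂ hn₁ hn₂ heq
      obtain ⟨p, hp, rfl⟩ := Finset.mem_image.1 hz
      have hu₁G : u₁ ∈ G := Finset.mem_erase.2 ⟨hn₁, hu₁⟩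
      have hu₂G : u₂ ∈ G := Finset.mem_erase.2 ⟨hn₂, hu₂⟩
      have hc₁ : 0 < ψ v - ψ u₁ := hcpos _ hu₁G
      have hc₂ : 0 < ψ v - ψ u₂ := hcpos _ hu₂G
      have hψeq := congrArg ψ heq
      rw [map_add, map_sub, map_sub, map_sub] at hψeq
      have hcz : 0 < ψ v - ψ (zf p) := by linarith
      have hz' : (zf p : V) - v = (ψ v - ψ (zf p)) • p := by
        have h := hray (zf p) (hzfG p hp)
        rwa [hzfg p hp] at h
      have hveq : (ψ v - ψ u₁) • g u₁ + (ψ v - ψ u₂) • g u₂ = (ψ v - ψ (zf p)) • p := by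
        rw [← hray u₁ hu₁G, ← hray u₂ hu₂G, heq, hz']
      have hg₁C : g u₁ ∈ C :=
        subset_convexHull ℝ (GG : Set V) (Finset.mem_coe.2 (Finset.mem_image_of_mem g hu₁G))
      have hg₂C : g u₂ ∈ C :=
        subset_convexHull ℝ (GG : Set V) (Finset.mem_coe.2 (Finset.mem_image_of_mem g hu₂G))
      have hpE : p ∈ E := (hEmem p).1 hp
      have hseg : p ∈ openSegment ℝ (g u₁) (g u₂) := by
        refine ⟨(ψ v - ψ u₁) / (ψ v - ψ (zf p)), (ψ v - ψ u₂) / (ψ v - ψ (zf p)),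
          div_pos hc₁ hcz, div_pos hc₂ hcz, ?_, ?_⟩
        · field_simp
          linarith
        · have h : (ψ v - ψ (zf p))⁻¹ • ((ψ v - ψ u₁) • g u₁ + (ψ v - ψ u₂) • g u₂) = p := by
            rw [hveq, inv_smul_smul₀ hcz.ne']
          rw [div_eq_inv_mul, div_eq_inv_mul, ← smul_smul, ← smul_smul, ← smul_add]
          exact h
      obtain ⟨h1, -⟩ := (mem_extremePoints.1 hpE).2 (g u₁) hg₁C (g u₂) hg₂C hseg
      have hu₁T : u₁ ∈ G.filter (fun u => g u = p) := Finset.mem_filter.2 ⟨hu₁G, h1⟩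
      have hle := hzf2 p hp u₁ hu₁T
      linarith


lemma tri_succ (k : ℕ) : ∃ m : ℤ, ((k:ℤ) * ((k:ℤ)+1))/2 = m ∧
    (((k:ℤ)+1) * (((k:ℤ)+1)+1))/2 = m + ((k:ℤ)+1) ∧ (k:ℤ) ≤ m ∧ 0 ≤ m := by
  obtain ⟨m, hm⟩ := Int.even_mul_succ_self (k:ℤ)
  have hm2 : (k:ℤ) * ((k:ℤ)+1) = 2*m := by rw [hm]; ring
  have hk : (0:ℤ) ≤ (k:ℤ) := Int.natCast_nonneg k
  refine ⟨m, ?_, ?_, ?_, ?_⟩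
  · rw [hm2, Int.mul_ediv_cancel_left _ two_ne_zero]
  · have h2 : ((k:ℤ)+1) * (((k:ℤ)+1)+1) = 2 * (m + ((k:ℤ)+1)) := by linear_combination hm2
    rw [h2, Int.mul_ediv_cancel_left _ two_ne_zero]
  · rcases Nat.eq_zero_or_pos k with rfl | hpos
    · simp only [Nat.cast_zero] at hm2 ⊢
      omega
    · have h1 : (1:ℤ) ≤ (k:ℤ) := by exact_mod_cast hpos
      nlinarith
  · nlinarith

theorem aux :
    ∀ (e : ℕ) (N : ℕ) (A B : Finset V), A.Nonempty → B.Nonempty →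
      A.card + B.card ≤ N → B.card ≤ A.card →
      e ≤ adim (A + B) →
      (A.card : ℤ) + e * B.card - e * (e + 1) / 2 ≤ ((A + B).card : ℤ) := by
  intro e
  induction e using Nat.strong_induction_on with
  | _ e ihe =>
  intro N
  induction N using Nat.strong_induction_on with
  | _ N ihN =>
  intro A B hA hB hN hcard hdim
  match e, ihe with
  | 0, _ =>
    have h := card_le_card_add A B hB
    push_cast
    have : (A.card : ℤ) ≤ ((A + B).card : ℤ) := by exact_mod_cast h
    simp only [Nat.cast_zero, zero_mul, zero_add, zero_sub]
    norm_num
    linarith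
  | (e' + 1), ihe =>
  obtain ⟨m, hm1, hm2, hm3, hm4⟩ := tri_succ e'
  -- base case |B| = 1
  by_cases hB1 : B.card = 1
  · obtain ⟨b, rfl⟩ := Finset.card_eq_one.1 hB1
    rw [Finset.card_add_singleton]
    push_cast
    rw [hm2]
    simp only [Finset.card_singleton]
    push_cast
    linarith
  -- now |B| ≥ 2 (and |A| ≥ 2)
  have hB2 : 2 ≤ B.card := by
    have := Finset.card_pos.2 hB
    omega
  have hA2 : 2 ≤ A.card := le_trans hB2 hcard
  obtain ⟨ψ, hinjA, hinjB⟩ := exists_inj_functional A B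
  obtain ⟨a₀, ha₀A, ha₀max⟩ := Finset.exists_max_image A ψ hA
  obtain ⟨b₀, hb₀B, hb₀max⟩ := Finset.exists_max_image B ψ hB
  have hA'ne : (A.erase a₀).Nonempty := by
    rw [← Finset.card_pos, Finset.card_erase_of_mem ha₀A]; omega
  have hB'ne : (B.erase b₀).Nonempty := by
    rw [← Finset.card_pos, Finset.card_erase_of_mem hb₀B]; omega
  have hacZ : ((A.erase a₀).card : ℤ) = (A.card : ℤ) - 1 := by
    rw [Finset.card_erase_of_mem ha₀A]; push_cast [Nat.cast_sub (by omega : 1 ≤ A.card)]; ring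
  have hbcZ : ((B.erase b₀).card : ℤ) = (B.card : ℤ) - 1 := by
    rw [Finset.card_erase_of_mem hb₀B]; push_cast [Nat.cast_sub (by omega : 1 ≤ B.card)]; ring
  have hstrictA : ∀ a ∈ A, a ≠ a₀ → ψ a < ψ a₀ := by
    intro a ha hne
    exact lt_of_le_of_ne (ha₀max a ha) (fun h => hne (hinjA a ha a₀ ha₀A h))
  have hstrictB : ∀ b ∈ B, b ≠ b₀ → ψ b < ψ b₀ := by
    intro b hb hne
    exact lt_of_le_of_ne (hb₀max b hb) (fun h => hne (hinjB b hb b₀ hb₀B h))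
  have hvAB : a₀ + b₀ ∈ A + B := Finset.add_mem_add ha₀A hb₀B
  have hvA'B : a₀ + b₀ ∉ A.erase a₀ + B := by
    intro hmem
    obtain ⟨a, ha, b, hb, hab⟩ := Finset.mem_add.1 hmem
    have h1 : ψ a < ψ a₀ :=
      hstrictA a (Finset.mem_of_mem_erase ha) (Finset.ne_of_mem_erase ha)
    have h2 : ψ b ≤ ψ b₀ := hb₀max b hb
    have h3 := congrArg ψ hab
    rw [map_add, map_add] at h3
    linarith
  have hvAB' : a₀ + b₀ ∉ A + B.erase b₀ := by
    intro hmem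
    obtain ⟨a, ha, b, hb, hab⟩ := Finset.mem_add.1 hmem
    have h1 : ψ b < ψ b₀ :=
      hstrictB b (Finset.mem_of_mem_erase hb) (Finset.ne_of_mem_erase hb)
    have h2 : ψ a ≤ ψ a₀ := ha₀max a ha
    have h3 := congrArg ψ hab
    rw [map_add, map_add] at h3
    linarith
  have hvA'B' : a₀ + b₀ ∉ A.erase a₀ + B.erase b₀ := fun h =>
    hvA'B (Finset.add_subset_add_left (Finset.erase_subset _ _) h)
  -- the sum with the small set removed is a subset
  have hsubA'B : A.erase a₀ + B ⊆ A + B :=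
    Finset.add_subset_add_right (Finset.erase_subset _ _)
  have hsubAB' : A + B.erase b₀ ⊆ A + B :=
    Finset.add_subset_add_left (Finset.erase_subset _ _)
  have hsubA'B' : A.erase a₀ + B.erase b₀ ⊆ A + B :=
    le_trans (Finset.add_subset_add_left (Finset.erase_subset _ _)) hsubA'B
  rcases lt_or_eq_of_le hcard with hlt | heqc
  -- CASE |B| < |A|
  · by_cases h1 : e' + 1 ≤ adim (A.erase a₀ + B)
    · -- dimension preserved: gain 1 via the vertex a₀ + b₀
      have hIH := ihN (A.card + B.card - 1) (by omega) (A.erase a₀) B hA'ne hB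
        (by rw [Finset.card_erase_of_mem ha₀A]; omega)
        (by rw [Finset.card_erase_of_mem ha₀A]; omega) h1
      have hgain : (A.erase a₀ + B).card + 1 ≤ (A + B).card :=
        Finset.card_lt_card ⟨hsubA'B, fun hss => hvA'B (hss hvAB)⟩
      push_cast at hIH hgain ⊢
      rw [hm2] at hIH ⊢
      linarith [hacZ]
    · -- dimension drops: a₀ + B is disjoint from (A \ a₀) + B, gain |B|
      have hd1 : adim (A.erase a₀ + B) = e' := by
        have := adim_le_erase_add B ha₀A hA'ne hB
        omega
      have hdisj : ∀ b ∈ B, a₀ + b ∉ A.erase a₀ + B :=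
        not_mem_of_dim_lt ha₀A hA'ne (by omega)
      have hsplit : A + B = (A.erase a₀ + B) ∪ ({a₀} + B) := by
        conv_lhs => rw [← Finset.insert_erase ha₀A]
        rw [Finset.insert_eq, Finset.union_add, Finset.union_comm]
      have hdisj2 : Disjoint (A.erase a₀ + B) ({a₀} + B) := by
        rw [Finset.disjoint_right]
        intro x hx
        obtain ⟨y, hy, b, hb, hyb⟩ := Finset.mem_add.1 hx
        rw [Finset.mem_singleton] at hy
        subst hy
        rw [← hyb]
        exact hdisj b hb
      have hcardeq : (A + B).card = (A.erase a₀ + B).card + B.card := by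
        rw [hsplit, Finset.card_union_of_disjoint hdisj2, Finset.card_singleton_add]
      have hIH := ihe e' (by omega) ((A.erase a₀).card + B.card) (A.erase a₀) B hA'ne hB
        le_rfl (by rw [Finset.card_erase_of_mem ha₀A]; omega) (le_of_eq hd1.symm)
      push_cast at hIH ⊢
      rw [hm1] at hIH
      rw [hm2]
      have hce : ((A + B).card : ℤ) = ((A.erase a₀ + B).card : ℤ) + B.card := by
        exact_mod_cast hcardeq
      linarith [hacZ]
  -- CASE |B| = |A|
  · by_cases h3 : e' + 1 ≤ adim (A + B.erase b₀)
    · by_cases h5 : e' + 1 ≤ adim (A.erase a₀ + B.erase b₀)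
      · -- hard case: use the extreme-ray lemma, gain (e'+1) + 1
        have hψU : ∀ u ∈ A + B, u ≠ a₀ + b₀ → ψ u < ψ (a₀ + b₀) := by
          intro u hu hne
          obtain ⟨a, ha, b, hb, rfl⟩ := Finset.mem_add.1 hu
          have h1 : ψ a ≤ ψ a₀ := ha₀max a ha
          have h2 : ψ b ≤ ψ b₀ := hb₀max b hb
          rcases eq_or_ne a a₀ with rfl | hna
          · have hnb : b ≠ b₀ := fun h => hne (by rw [h])
            have := hstrictB b hb hnb
            rw [map_add, map_add]
            linarith
          · have := hstrictA a ha hna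
            rw [map_add, map_add]
            linarith
        obtain ⟨Z, hZsub, hZcard, hZprop⟩ := key (A + B) hvAB ψ hψU
        have hZnew : ∀ z ∈ Z, z ∉ A.erase a₀ + B.erase b₀ := by
          intro z hz hmem
          obtain ⟨a, ha, b, hb, hab⟩ := Finset.mem_add.1 hmem
          have haA : a ∈ A := Finset.mem_of_mem_erase ha
          have hbB : b ∈ B := Finset.mem_of_mem_erase hb
          refine hZprop z hz (a + b₀) (Finset.add_mem_add haA hb₀B)
            (a₀ + b) (Finset.add_mem_add ha₀A hbB) ?_ ?_ ?_
          · intro h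
            exact Finset.ne_of_mem_erase ha (by exact add_right_cancel h)
          · intro h
            exact Finset.ne_of_mem_erase hb (by exact add_left_cancel h)
          · rw [← hab]; abel
        have hvZ : a₀ + b₀ ∉ Z := fun h => (Finset.ne_of_mem_erase (hZsub h)) rfl
        have hZAB : Z ⊆ A + B := fun z hz => Finset.mem_of_mem_erase (hZsub hz)
        have hdisjZ : Disjoint (A.erase a₀ + B.erase b₀) (insert (a₀ + b₀) Z) := by
          rw [Finset.disjoint_right]
          intro x hx
          rcases Finset.mem_insert.1 hx with rfl | hxZ
          · exact hvA'B'
          · exact hZnew x hxZ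
        have hsubU : (A.erase a₀ + B.erase b₀) ∪ insert (a₀ + b₀) Z ⊆ A + B := by
          apply Finset.union_subset hsubA'B'
          intro x hx
          rcases Finset.mem_insert.1 hx with rfl | hxZ
          · exact hvAB
          · exact hZAB hxZ
        have hgain : (A.erase a₀ + B.erase b₀).card + (e' + 1) + 1 ≤ (A + B).card := by
          have hc := Finset.card_le_card hsubU
          rw [Finset.card_union_of_disjoint hdisjZ, Finset.card_insert_of_notMem hvZ] at hc
          omega
        have hIH := ihN (A.card + B.card - 2) (by omega) (A.erase a₀) (B.erase b₀) hA'ne hB'ne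
          (by rw [Finset.card_erase_of_mem ha₀A, Finset.card_erase_of_mem hb₀B]; omega)
          (by rw [Finset.card_erase_of_mem ha₀A, Finset.card_erase_of_mem hb₀B]; omega) h5
        have hprod : ((e':ℤ)) * ((B.erase b₀).card:ℤ) = (e':ℤ)*(B.card:ℤ) - e' := by
          rw [hbcZ]; ring
        push_cast at hIH hgain ⊢
        rw [hm2] at hIH ⊢
        linarith [hacZ, hbcZ, hprod]
      · -- A-removal drops dimension of A + B': gain |B'| + 1
        have hd5 : adim (A.erase a₀ + B.erase b₀) = e' := by
          have := adim_le_erase_add (B.erase b₀) ha₀A hA'ne hB'ne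
          omega
        have hdisj : ∀ b ∈ B.erase b₀, a₀ + b ∉ A.erase a₀ + B.erase b₀ :=
          not_mem_of_dim_lt ha₀A hA'ne (by omega)
        have hdisj2 : Disjoint (A.erase a₀ + B.erase b₀) (insert (a₀ + b₀) ({a₀} + B.erase b₀)) := by
          rw [Finset.disjoint_right]
          intro x hx
          rcases Finset.mem_insert.1 hx with rfl | hxZ
          · exact hvA'B'
          · obtain ⟨y, hy, b, hb, hyb⟩ := Finset.mem_add.1 hxZ
            rw [Finset.mem_singleton] at hy
            subst hy
            rw [← hyb]
            exact hdisj b hb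
        have hvnot : a₀ + b₀ ∉ {a₀} + B.erase b₀ := by
          intro h
          obtain ⟨y, hy, b, hb, hyb⟩ := Finset.mem_add.1 h
          rw [Finset.mem_singleton] at hy
          subst hy
          exact Finset.ne_of_mem_erase hb (add_left_cancel hyb)
        have hsubU : (A.erase a₀ + B.erase b₀) ∪ insert (a₀ + b₀) ({a₀} + B.erase b₀) ⊆ A + B := by
          apply Finset.union_subset hsubA'B'
          intro x hx
          rcases Finset.mem_insert.1 hx with rfl | hxZ
          · exact hvAB
          · obtain ⟨y, hy, b, hb, hyb⟩ := Finset.mem_add.1 hxZ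
            rw [Finset.mem_singleton] at hy
            subst hy
            rw [← hyb]
            exact Finset.add_mem_add ha₀A (Finset.mem_of_mem_erase hb)
        have hgain : (A.erase a₀ + B.erase b₀).card + (B.erase b₀).card + 1 ≤ (A + B).card := by
          have hc := Finset.card_le_card hsubU
          rw [Finset.card_union_of_disjoint hdisj2, Finset.card_insert_of_notMem hvnot,
            Finset.card_singleton_add] at hc
          omega
        have hIH := ihe e' (by omega) ((A.erase a₀).card + (B.erase b₀).card)
          (A.erase a₀) (B.erase b₀) hA'ne hB'ne le_rfl
          (by rw [Finset.card_erase_of_mem ha₀A, Finset.card_erase_of_mem hb₀B]; omega)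
          (le_of_eq hd5.symm)
        have hprod : ((e':ℤ)) * ((B.erase b₀).card:ℤ) = (e':ℤ)*(B.card:ℤ) - e' := by
          rw [hbcZ]; ring
        push_cast at hIH hgain ⊢
        rw [hm1] at hIH
        rw [hm2]
        linarith [hacZ, hbcZ, hprod]
    · -- B-removal drops dimension: b₀ + A disjoint from B' + A, gain |A|
      have hd3 : adim (A + B.erase b₀) = e' := by
        have h := adim_le_erase_add (A := B) A hb₀B hB'ne hA
        rw [add_comm B A, add_comm (B.erase b₀) A] at h
        omega
      have hdisj : ∀ a ∈ A, b₀ + a ∉ B.erase b₀ + A := by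
        apply not_mem_of_dim_lt (A := B) hb₀B hB'ne
        rw [add_comm B A, add_comm (B.erase b₀) A]
        omega
      have hsplit : B + A = (B.erase b₀ + A) ∪ ({b₀} + A) := by
        conv_lhs => rw [← Finset.insert_erase hb₀B]
        rw [Finset.insert_eq, Finset.union_add, Finset.union_comm]
      have hdisj2 : Disjoint (B.erase b₀ + A) ({b₀} + A) := by
        rw [Finset.disjoint_right]
        intro x hx
        obtain ⟨y, hy, a, ha, hya⟩ := Finset.mem_add.1 hx
        rw [Finset.mem_singleton] at hy
        subst hy
        rw [← hya]
        exact hdisj a ha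
      have hcardeq : (A + B).card = (A + B.erase b₀).card + A.card := by
        rw [add_comm A B, hsplit, Finset.card_union_of_disjoint hdisj2,
          Finset.card_singleton_add, add_comm (B.erase b₀) A]
      have hIH := ihe e' (by omega) (A.card + (B.erase b₀).card) A (B.erase b₀) hA hB'ne
        le_rfl (by rw [Finset.card_erase_of_mem hb₀B]; omega) (le_of_eq hd3.symm)
      push_cast at hIH ⊢
      rw [hm1] at hIH
      rw [hm2]
      have hce : ((A + B).card : ℤ) = ((A + B.erase b₀).card : ℤ) + A.card := by
        exact_mod_cast hcardeq
      have heqcZ : (B.card : ℤ) = (A.card : ℤ) := by exact_mod_cast heqc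
      have hprod : ((e':ℤ)) * ((B.erase b₀).card:ℤ) = (e':ℤ)*(B.card:ℤ) - e' := by
        rw [hbcZ]; ring
      linarith [hbcZ, hprod]


end Ruzsa14

theorem stmt_14 (d : ℕ) (A B : Finset (Fin d → ℝ))
    (hA : A.Nonempty) (hB : B.Nonempty)
    (hdim : Module.finrank ℝ (affineSpan ℝ (A : Set (Fin d → ℝ))).direction = d)
    (hcard : B.card ≤ A.card) :
    (A.card : ℤ) + d * B.card - d * (d + 1) / 2 ≤ ((A + B).card : ℤ) := by
  classical
  have hdim' : d ≤ Ruzsa14.adim (A + B) := by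
    rw [direction_affineSpan] at hdim
    have h2 := Submodule.finrank_mono (Ruzsa14.vectorSpan_le_add A B hA hB)
    rw [hdim] at h2
    exact h2
  exact Ruzsa14.aux d (A.card + B.card) A B hA hB le_rfl hcard hdim'
end
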